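/- arXiv:2302.11804 — 12 statements merged into one kernel-verified Lean document; each statement's English description precedes it below -/
import Mathlib

section
/- For every natural number n and every tuple x : Fin n → ℝ with all entries nonnegative, the sum over all subsets A of Fin n with |A| ≥ 2 of the product ∏_{i∈A} x_i is at most (min over j of the sum of x_i over i ≠ j) times (∑_i x_i) times exp(∑_i x_i). -/
/-!
Expanding `∏ i, (1 + x i)` over subsets, the left-hand side is `∏ i, (1 + x i) - 1 - S` with
`S = ∑ i, x i`. Fix `j`, put `a = x j` and `T = S - a`. Then `∏ i, (1 + x i) ≤ (1 + a) e^T`, and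
`(1 + a) e^T - 1 - a - T = (1 + a)(e^T - 1) - T ≤ T((1 + a) e^T - 1) ≤ T(e^S - 1) ≤ T S e^S`,
using `e^u - 1 ≤ u e^u` twice and `1 + a ≤ e^a`.
-/

open Finset

theorem Finset.sum_filter_two_le_card_prod {ι R : Type*} [CommRing R] (s : Finset ι)
    (x : ι → R) :
    ∑ A ∈ s.powerset with 2 ≤ #A, ∏ i ∈ A, x i = ∏ i ∈ s, (1 + x i) - 1 - ∑ i ∈ s, x i := by
  classical
  have hsmall : {A ∈ s.powerset | ¬2 ≤ #A} = s.powersetCard 0 ∪ s.powersetCard 1 := by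
    ext A
    simp only [mem_filter, mem_powerset, mem_union, mem_powersetCard, ← and_or_left]
    exact and_congr_right fun _ => by omega
  have hdisj : Disjoint (s.powersetCard 0) (s.powersetCard 1) :=
    s.pairwise_disjoint_powersetCard (by decide)
  rw [prod_one_add, ← sum_filter_add_sum_filter_not s.powerset (fun A => 2 ≤ #A), hsmall,
    sum_union hdisj, powersetCard_zero, powersetCard_one, sum_singleton, sum_map]
  simp only [Function.Embedding.coeFn_mk, prod_empty, prod_singleton]
  ring

theorem Real.exp_sub_one_le_mul_exp (u : ℝ) : Real.exp u - 1 ≤ u * Real.exp u := by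
  have h := Real.add_one_le_exp (-u)
  rw [Real.exp_neg] at h
  have := Real.exp_pos u
  field_simp at h
  nlinarith

theorem one_add_mul_exp_sub_le {a T : ℝ} (ha : 0 ≤ a) (hT : 0 ≤ T) :
    (1 + a) * Real.exp T - 1 - (a + T) ≤ T * (a + T) * Real.exp (a + T) := by
  have h_exp_add : (1 + a) * Real.exp T ≤ Real.exp (a + T) := by
    rw [Real.exp_add]
    gcongr
    linarith [Real.add_one_le_exp a]
  calc (1 + a) * Real.exp T - 1 - (a + T) = (1 + a) * (Real.exp T - 1) - T := by ring
    _ ≤ (1 + a) * (T * Real.exp T) - T := by gcongr; exact Real.exp_sub_one_le_mul_exp T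
    _ = T * ((1 + a) * Real.exp T - 1) := by ring
    _ ≤ T * (Real.exp (a + T) - 1) := by gcongr
    _ ≤ T * ((a + T) * Real.exp (a + T)) := by gcongr; exact Real.exp_sub_one_le_mul_exp _
    _ = T * (a + T) * Real.exp (a + T) := by ring

theorem prod_one_add_sub_one_sub_sum_le {ι : Type*} [DecidableEq ι] (s : Finset ι)
    {x : ι → ℝ} (hx : ∀ i, 0 ≤ x i) {j : ι} (hj : j ∈ s) :
    ∏ i ∈ s, (1 + x i) - 1 - ∑ i ∈ s, x i ≤
      (∑ i ∈ s.erase j, x i) * (∑ i ∈ s, x i) * Real.exp (∑ i ∈ s, x i) := by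
  rw [← mul_prod_erase s _ hj, ← add_sum_erase s x hj]
  have hxj := hx j
  calc (1 + x j) * ∏ i ∈ s.erase j, (1 + x i) - 1 - (x j + ∑ i ∈ s.erase j, x i)
      ≤ (1 + x j) * Real.exp (∑ i ∈ s.erase j, x i) - 1 - (x j + ∑ i ∈ s.erase j, x i) := by
        gcongr; exact Real.prod_one_add_le_exp_sum _ hx
    _ ≤ _ := one_add_mul_exp_sub_le hxj (sum_nonneg fun i _ => hx i)

/-- For every `n : ℕ` and every `x : Fin n → ℝ` with all entries nonnegative,
`∑_{A ⊆ [n], |A| ≥ 2} ∏_{i∈A} x_i ≤ (min_j ∑_{i≠j} x_i) · (∑_i x_i) · e^{∑_i x_i}`. -/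
theorem sum_prod_subsets_card_ge_two_le (n : ℕ) (x : Fin n → ℝ) (hx : ∀ i, 0 ≤ x i) :
    ∑ A ∈ Finset.univ.filter (fun A : Finset (Fin n) => 2 ≤ A.card), ∏ i ∈ A, x i ≤
      (⨅ j : Fin n, ∑ i ∈ Finset.univ.erase j, x i) * (∑ i, x i) * Real.exp (∑ i, x i) := by
  rw [← powerset_univ, sum_filter_two_le_card_prod]
  rcases isEmpty_or_nonempty (Fin n) with _ | _
  · simp [Real.iInf_of_isEmpty]
  · obtain ⟨j, hj⟩ := exists_eq_ciInf_of_finite (f := fun j : Fin n => ∑ i ∈ univ.erase j, x i)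
    rw [← hj]
    exact prod_one_add_sub_one_sub_sum_le univ hx (mem_univ j)
end

section
/- Let n ∈ ℕ and q : Fin n → [0,1]. Under ℙ let Γ be a random subset of Fin n excluding each i with probability q_i independently of the others, and let Γ̃ be a random subset of Fin n excluding each i with probability (q_1⋯q_n)^{1/n} independently. Then |Γ| is stochastically dominated by |Γ̃|: for all m, ℙ(|Γ| ≤ m) ≥ ℙ(|Γ̃| ≤ m). -/
/-!
Write `F(q) = 𝔼 f(|Γ|)` for an antitone `f` (here `f = 1_{≤ m}`). Conditioning on two coordinates
`i, j` gives `F(q) = c₂ + (c₁ - c₂)(q_i + q_j) + (c₀ - 2c₁ + c₂) q_i q_j`, where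
`c_k = 𝔼 f(|Γ ∖ {i, j}| + k)`, so `c₁ ≥ c₂`, and replacing `(q_i, q_j)` by a pair with the same
product and a smaller sum does not increase `F`. If `q_i < g < q_j` for the geometric mean `g`, the
pair `(g, q_i q_j / g)` is such a pair, and it fixes one more coordinate at `g`; after at most `n`
steps all coordinates equal `g`. When `g = 0` the comparison is trivial: `Γ̃` is then all of
`Fin n`, the least favourable value of `f`.
-/

open Finset

namespace Finset

variable {ι : Type*} {t : Finset ι}

lemma exists_lt_and_exists_gt_of_prod_eq_pow {q : ι → ℝ} {g : ℝ} (hg : 0 < g)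
    (hq : ∀ i ∈ t, 0 ≤ q i) (hprod : ∏ i ∈ t, q i = g ^ #t) (hne : ∃ i ∈ t, q i ≠ g) :
    (∃ i ∈ t, q i < g) ∧ ∃ j ∈ t, g < q j := by
  have hpos : ∀ i ∈ t, 0 < q i := fun i hi =>
    (hq i hi).lt_of_ne (prod_ne_zero_iff.1 (hprod ▸ (pow_pos hg _).ne') i hi).symm
  obtain ⟨i, hi, hqi⟩ := hne
  constructor
  · by_contra! hge
    have := prod_lt_prod (fun _ _ => hg) hge ⟨i, hi, (hge i hi).lt_of_ne hqi.symm⟩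
    rw [prod_const, hprod] at this
    exact lt_irrefl _ this
  · by_contra! hle
    have := prod_lt_prod hpos hle ⟨i, hi, (hle i hi).lt_of_ne hqi⟩
    rw [prod_const, hprod] at this
    exact lt_irrefl _ this

variable [DecidableEq ι]

lemma exists_eq_insert_insert {i j : ι} (hi : i ∈ t) (hj : j ∈ t) (hij : i ≠ j) :
    ∃ s, i ∉ s ∧ j ∉ s ∧ t = insert i (insert j s) := by
  refine ⟨(t.erase i).erase j, fun h => notMem_erase i t (mem_of_mem_erase h),
    notMem_erase j _, ?_⟩
  rw [insert_erase (mem_erase.2 ⟨hij.symm, hj⟩), insert_erase hi]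

lemma prod_eq_prod_of_pair {M : Type*} [CommMonoid M] {q q' : ι → M} {i j : ι}
    (hi : i ∈ t) (hj : j ∈ t) (hij : i ≠ j) (hrest : ∀ x ∈ t, x ≠ i → x ≠ j → q' x = q x)
    (hprod : q' i * q' j = q i * q j) : ∏ x ∈ t, q' x = ∏ x ∈ t, q x := by
  obtain ⟨s, his, hjs, rfl⟩ := exists_eq_insert_insert hi hj hij
  have hijs : i ∉ insert j s := by simp [hij, his]
  rw [prod_insert hijs, prod_insert hjs, prod_insert hijs, prod_insert hjs, ← mul_assoc,
    ← mul_assoc, hprod, prod_congr rfl fun x hx => hrest x (by simp [hx])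
      (by rintro rfl; exact his hx) (by rintro rfl; exact hjs hx)]

end Finset

namespace RandomSubset

variable {ι : Type*} [DecidableEq ι]

/-- `expectCard s q f` is `𝔼 f(|Γ|)` for the random `Γ ⊆ s` that excludes each `i ∈ s`
independently with probability `q i`. -/
noncomputable def expectCard (s : Finset ι) (q : ι → ℝ) (f : ℕ → ℝ) : ℝ :=
  ∑ A ∈ s.powerset, f #A * ((∏ i ∈ A, (1 - q i)) * ∏ i ∈ s \ A, q i)

variable {s t : Finset ι} {q q' : ι → ℝ} {f f' : ℕ → ℝ}

lemma expectCard_congr (h : ∀ i ∈ s, q i = q' i) : expectCard s q = expectCard s q' := by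
  funext f
  refine sum_congr rfl fun A hA => ?_
  have hAs := mem_powerset.1 hA
  rw [prod_congr rfl fun i hi => congrArg (1 - ·) (h i (hAs hi)),
    prod_congr rfl fun i hi => h i (mem_sdiff.1 hi).1]

lemma expectCard_insert {i : ι} (hi : i ∉ s) :
    expectCard (insert i s) q f =
      q i * expectCard s q f + (1 - q i) * expectCard s q (fun k => f (k + 1)) := by
  rw [expectCard, sum_powerset_insert hi, expectCard, expectCard, mul_sum, mul_sum]
  congr 1 <;> refine sum_congr rfl fun A hA => ?_
  · have hiA : i ∉ s \ A := fun h => hi (mem_sdiff.1 h).1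
    rw [insert_sdiff_of_notMem _ fun h => hi (mem_powerset.1 hA h), prod_insert hiA]
    ring
  · have hiA : i ∉ A := fun h => hi (mem_powerset.1 hA h)
    rw [card_insert_of_notMem hiA, prod_insert hiA, insert_sdiff_insert,
      sdiff_insert_of_notMem hi]
    ring

lemma expectCard_const (c : ℝ) : expectCard s q (fun _ => c) = c := by
  have hweights := prod_add (fun i => 1 - q i) q s
  simp only [sub_add_cancel, prod_const_one] at hweights
  rw [expectCard, ← mul_sum, ← hweights, mul_one]

lemma expectCard_mono (hq : ∀ i ∈ s, q i ∈ Set.Icc 0 1) (hf : ∀ k ≤ #s, f k ≤ f' k) :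
    expectCard s q f ≤ expectCard s q f' := by
  refine sum_le_sum fun A hA => mul_le_mul_of_nonneg_right ?_ ?_
  · exact hf _ (card_le_card (mem_powerset.1 hA))
  · have hAs := mem_powerset.1 hA
    refine mul_nonneg (prod_nonneg fun i hi => ?_) (prod_nonneg fun i hi => (hq i ?_).1)
    · exact sub_nonneg.2 (hq i (hAs hi)).2
    · exact (mem_sdiff.1 hi).1

lemma expectCard_zero : expectCard s 0 f = f #s := by
  rw [expectCard, sum_eq_single s]
  · simp
  · intro A hA hne
    obtain ⟨i, hi⟩ := sdiff_nonempty.2 fun h => hne ((mem_powerset.1 hA).antisymm h)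
    rw [prod_eq_zero hi rfl, mul_zero, mul_zero]
  · exact fun h => absurd (mem_powerset_self s) h

lemma apply_card_le_expectCard (hq : ∀ i ∈ s, q i ∈ Set.Icc 0 1) (hf : Antitone f) :
    f #s ≤ expectCard s q f :=
  (expectCard_const (f #s)).symm.le.trans (expectCard_mono hq fun _ hk => hf hk)

lemma expectCard_le_of_prod_eq_of_sum_le {i j : ι} (hi : i ∈ t) (hj : j ∈ t) (hij : i ≠ j)
    (hq : ∀ x ∈ t, q x ∈ Set.Icc 0 1) (hf : Antitone f)
    (hrest : ∀ x ∈ t, x ≠ i → x ≠ j → q' x = q x)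
    (hprod : q' i * q' j = q i * q j) (hsum : q' i + q' j ≤ q i + q j) :
    expectCard t q' f ≤ expectCard t q f := by
  obtain ⟨s, his, hjs, rfl⟩ := exists_eq_insert_insert hi hj hij
  have hijs : i ∉ insert j s := by simp [hij, his]
  have hs : ∀ x ∈ s, q' x = q x := fun x hx =>
    hrest x (by simp [hx]) (by rintro rfl; exact his hx) (by rintro rfl; exact hjs hx)
  rw [expectCard_insert hijs, expectCard_insert hijs, expectCard_insert hjs, expectCard_insert hjs,
    expectCard_insert hjs, expectCard_insert hjs, expectCard_congr hs]
  have hc : expectCard s q (fun k => f (k + 1 + 1)) ≤ expectCard s q (fun k => f (k + 1)) :=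
    expectCard_mono (fun x hx => hq x (by simp [hx])) fun k _ => hf (Nat.le_succ _)
  linear_combination mul_nonneg (sub_nonneg.2 hc) (sub_nonneg.2 hsum) +
    (expectCard s q f - 2 * expectCard s q (fun k => f (k + 1)) +
      expectCard s q (fun k => f (k + 1 + 1))) * hprod

lemma exists_smoothing_step {g : ℝ} (hg : 0 < g) (hf : Antitone f)
    (hq : ∀ i ∈ t, q i ∈ Set.Icc 0 1) (hprod : ∏ i ∈ t, q i = g ^ #t)
    (hne : ∃ i ∈ t, q i ≠ g) :
    ∃ q' : ι → ℝ, (∀ i ∈ t, q' i ∈ Set.Icc 0 1) ∧ ∏ i ∈ t, q' i = g ^ #t ∧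
      #{i ∈ t | q' i ≠ g} < #{i ∈ t | q i ≠ g} ∧ expectCard t q' f ≤ expectCard t q f := by
  obtain ⟨⟨i, hi, hqi⟩, ⟨j, hj, hqj⟩⟩ :=
    exists_lt_and_exists_gt_of_prod_eq_pow hg (fun x hx => (hq x hx).1) hprod hne
  have hij : i ≠ j := by rintro rfl; linarith
  set q' := Function.update (Function.update q i g) j (q i * q j / g)
  have hq'i : q' i = g := by simp [q', hij]
  have hq'j : q' j = q i * q j / g := by simp [q']
  have hrest : ∀ x ∈ t, x ≠ i → x ≠ j → q' x = q x := fun x _ hxi hxj => by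
    simp [q', hxi, hxj]
  have hpair : q' i * q' j = q i * q j := by rw [hq'i, hq'j]; field_simp
  have hsum : q' i + q' j ≤ q i + q j := by
    rw [hq'i, hq'j, ← sub_nonneg]
    have : q i + q j - (g + q i * q j / g) = (g - q i) * (q j - g) / g := by field_simp; ring
    rw [this]
    exact div_nonneg (mul_nonneg (by linarith) (by linarith)) hg.le
  refine ⟨q', fun x hx => ?_, (prod_eq_prod_of_pair hi hj hij hrest hpair).trans hprod, ?_,
    expectCard_le_of_prod_eq_of_sum_le hi hj hij hq hf hrest hpair hsum⟩
  · by_cases hxi : x = i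
    · rw [hxi, hq'i]; exact ⟨hg.le, hqj.le.trans (hq j hj).2⟩
    by_cases hxj : x = j
    · rw [hxj, hq'j]
      refine ⟨div_nonneg (mul_nonneg (hq i hi).1 (hq j hj).1) hg.le, ?_⟩
      rw [div_le_one hg]
      nlinarith [(hq i hi).1, (hq j hj).2]
    · rw [hrest x hx hxi hxj]; exact hq x hx
  · refine card_lt_card ((ssubset_iff_of_subset fun x hx => ?_).2 ⟨i, ?_, ?_⟩)
    · simp only [mem_filter] at hx ⊢
      refine ⟨hx.1, fun hqx => hx.2 ?_⟩
      by_cases hxi : x = i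
      · rw [hxi, hq'i]
      by_cases hxj : x = j
      · subst hxj; linarith
      · rw [hrest x hx.1 hxi hxj, hqx]
    · simp [hi, hqi.ne]
    · simp [hq'i]

theorem expectCard_const_le {g : ℝ} (hg : 0 < g) (hf : Antitone f)
    (hq : ∀ i ∈ t, q i ∈ Set.Icc 0 1) (hprod : ∏ i ∈ t, q i = g ^ #t) :
    expectCard t (fun _ => g) f ≤ expectCard t q f := by
  induction hN : #{i ∈ t | q i ≠ g} using Nat.strong_induction_on generalizing q with
  | _ N ih =>
    by_cases hne : ∃ i ∈ t, q i ≠ g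
    · obtain ⟨q', hq', hprod', hlt, hle⟩ := exists_smoothing_step hg hf hq hprod hne
      exact (ih _ (hN ▸ hlt) hq' hprod' rfl).trans hle
    · simp only [not_exists, not_and, not_not] at hne
      exact (congrFun (expectCard_congr fun i hi => (hne i hi).symm) f).le

lemma sum_filter_card_le_eq_expectCard [Fintype ι] (q : ι → ℝ) (m : ℕ) :
    ∑ A ∈ univ.filter (fun A : Finset ι => #A ≤ m), (∏ i ∈ A, (1 - q i)) * ∏ i ∈ Aᶜ, q i =
      expectCard univ q (fun k => if k ≤ m then 1 else 0) := by
  rw [sum_filter, expectCard, powerset_univ]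
  refine sum_congr rfl fun A _ => ?_
  rw [compl_eq_univ_sdiff]
  split_ifs <;> simp

end RandomSubset

open RandomSubset in
/-- Stochastic dominance: if `Γ` excludes each `i` with probability `q_i` independently and
`Γ̃` excludes each `i` with the geometric mean probability `(q_1⋯q_n)^{1/n}` independently, then
`ℙ(|Γ| ≤ m) ≥ ℙ(|Γ̃| ≤ m)` for all `m`. -/
theorem card_random_subset_stochastic_dominance (n : ℕ) (hn : 0 < n) (q : Fin n → ℝ)
    (hq : ∀ i, q i ∈ Set.Icc (0 : ℝ) 1) (m : ℕ) :
    ∑ A ∈ Finset.univ.filter (fun A : Finset (Fin n) => A.card ≤ m),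
        (1 - (∏ i, q i) ^ ((1 : ℝ) / n)) ^ A.card *
          ((∏ i, q i) ^ ((1 : ℝ) / n)) ^ (n - A.card)
      ≤ ∑ A ∈ Finset.univ.filter (fun A : Finset (Fin n) => A.card ≤ m),
          (∏ i ∈ A, (1 - q i)) * ∏ i ∈ Aᶜ, q i := by
  set g := (∏ i, q i) ^ ((1 : ℝ) / n) with hg
  have hf : Antitone fun k : ℕ => if k ≤ m then (1 : ℝ) else 0 := fun a b hab => by
    dsimp only
    split_ifs <;> first | omega | norm_num
  have hq' : ∀ i ∈ univ, q i ∈ Set.Icc 0 1 := fun i _ => hq i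
  calc _ = expectCard (univ : Finset (Fin n)) (fun _ => g)
          fun k => if k ≤ m then (1 : ℝ) else 0 := by
        rw [← sum_filter_card_le_eq_expectCard (fun _ : Fin n => g) m]
        simp only [prod_const, Finset.card_compl, Fintype.card_fin]
    _ ≤ _ := ?_
    _ = _ := (sum_filter_card_le_eq_expectCard q m).symm
  rcases (prod_nonneg fun i _ => (hq i).1 : 0 ≤ ∏ i, q i).eq_or_lt with hzero | hpos
  · rw [hg, ← hzero, Real.zero_rpow (one_div_ne_zero (Nat.cast_ne_zero.2 hn.ne')),
      ← Pi.zero_def, expectCard_zero]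
    exact apply_card_le_expectCard hq' hf
  · refine expectCard_const_le (Real.rpow_pos_of_pos hpos _) hf hq' ?_
    rw [hg, card_univ, Fintype.card_fin, one_div, Real.rpow_inv_natCast_pow hpos.le hn.ne']
end

section
/- Let ν be a finite atomless complex measure on a countably separated measurable space and (𝒫_n) a dissecting system with max_{P∈𝒫_n} |ν|(P) → 0. Then lim_{n→∞} ∏_{P∈𝒫_n}(1 + ν(P)) = e^{ν(X)}. -/
open Filter MeasureTheory

/-- `μ` is the total variation measure of the complex measure `ν`. -/
def IsTotalVariation {X : Type*} [MeasurableSpace X] (ν : MeasureTheory.ComplexMeasure X)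
    (μ : MeasureTheory.Measure X) : Prop :=
  ∀ A : Set X, MeasurableSet A →
    IsLUB {r : ℝ | ∃ P : Finset (Set X), (∀ s ∈ P, MeasurableSet s) ∧ (∀ s ∈ P, s ⊆ A) ∧
        ((P : Set (Set X)).Pairwise fun s t => Disjoint s t) ∧ ⋃₀ (P : Set (Set X)) = A ∧
        r = ∑ s ∈ P, ‖ν s‖} ((μ A).toReal)

/-! For `‖z‖ ≤ 1/2` one has `‖log (1 + z) - z‖ ≤ ‖z‖²`, so `∏ (1 + z i) = exp (∑ log (1 + z i))`
and the sum of logarithms differs from `∑ z i` by at most `max ‖z i‖ * ∑ ‖z i‖`. With `z = ν` on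
the cells of `𝒫ₙ`, the first factor tends to `0`, the second is at most `|ν|(X)`, and
`∑ ν(P) = ν(X)` by additivity. -/

namespace Complex

lemma norm_log_one_add_sub_self_le_sq {z : ℂ} (hz : ‖z‖ ≤ 1 / 2) :
    ‖log (1 + z) - z‖ ≤ ‖z‖ ^ 2 := by
  have hinv : (1 - ‖z‖)⁻¹ ≤ 2 := by
    rw [inv_le_comm₀ (by linarith) two_pos]
    linarith
  calc ‖log (1 + z) - z‖ ≤ ‖z‖ ^ 2 * (1 - ‖z‖)⁻¹ / 2 :=
        norm_log_one_add_sub_self_le (hz.trans_lt one_half_lt_one)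
    _ ≤ ‖z‖ ^ 2 * 2 / 2 := by gcongr
    _ = ‖z‖ ^ 2 := by ring

lemma prod_one_add_eq_exp_sum_log {ι : Type*} (s : Finset ι) {z : ι → ℂ}
    (hz : ∀ i ∈ s, 1 + z i ≠ 0) :
    ∏ i ∈ s, (1 + z i) = exp (∑ i ∈ s, log (1 + z i)) := by
  rw [exp_sum]
  exact Finset.prod_congr rfl fun i hi => (exp_log (hz i hi)).symm

lemma norm_sum_log_one_add_sub_sum_le {ι : Type*} (s : Finset ι) {z : ι → ℂ} {ε : ℝ}
    (hε : ε ≤ 1 / 2) (hz : ∀ i ∈ s, ‖z i‖ ≤ ε) :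
    ‖∑ i ∈ s, log (1 + z i) - ∑ i ∈ s, z i‖ ≤ ε * ∑ i ∈ s, ‖z i‖ := by
  rw [← Finset.sum_sub_distrib, Finset.mul_sum]
  refine (norm_sum_le _ _).trans (Finset.sum_le_sum fun i hi => ?_)
  calc ‖log (1 + z i) - z i‖ ≤ ‖z i‖ ^ 2 :=
        norm_log_one_add_sub_self_le_sq ((hz i hi).trans hε)
    _ = ‖z i‖ * ‖z i‖ := sq _
    _ ≤ ε * ‖z i‖ := by gcongr; exact hz i hi

theorem tendsto_prod_one_add_of_tendsto_sum {ι : Type*} {s : ℕ → Finset ι} {z : ℕ → ι → ℂ}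
    {ε : ℕ → ℝ} {S : ℝ} {w : ℂ} (hε : Tendsto ε atTop (nhds 0))
    (hz : ∀ n, ∀ i ∈ s n, ‖z n i‖ ≤ ε n) (hS : ∀ n, ∑ i ∈ s n, ‖z n i‖ ≤ S)
    (hw : Tendsto (fun n => ∑ i ∈ s n, z n i) atTop (nhds w)) :
    Tendsto (fun n => ∏ i ∈ s n, (1 + z n i)) atTop (nhds (exp w)) := by
  have hsmall : ∀ᶠ n in atTop, ε n ≤ 1 / 2 := hε.eventually_le_const (by norm_num)
  have hbound : Tendsto (fun n => ε n * ∑ i ∈ s n, ‖z n i‖) atTop (nhds 0) :=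
    hε.zero_mul_isBoundedUnder_le (isBoundedUnder_of ⟨S, fun n =>
      (Real.norm_of_nonneg (Finset.sum_nonneg fun i _ => norm_nonneg (z n i))).trans_le (hS n)⟩)
  have hlog : Tendsto (fun n => ∑ i ∈ s n, log (1 + z n i) - ∑ i ∈ s n, z n i) atTop (nhds 0) :=
    squeeze_zero_norm' (hsmall.mono fun n hn => norm_sum_log_one_add_sub_sum_le _ hn (hz n)) hbound
  have hprod : ∀ᶠ n in atTop, ∏ i ∈ s n, (1 + z n i) = exp (∑ i ∈ s n, log (1 + z n i)) :=
    hsmall.mono fun n hn => prod_one_add_eq_exp_sum_log _ fun i hi =>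
      slitPlane_ne_zero (mem_slitPlane_of_norm_lt_one ((hz n i hi).trans_lt
        (hn.trans_lt one_half_lt_one)))
  refine (continuous_exp.tendsto w).comp ?_ |>.congr' (hprod.mono fun n hn => hn.symm)
  simpa using hlog.add hw

end Complex

lemma MeasureTheory.VectorMeasure.of_sUnion_finset {X M : Type*} [MeasurableSpace X] [AddCommMonoid M]
    [TopologicalSpace M] [T2Space M] (v : VectorMeasure X M) {P : Finset (Set X)}
    (hdisj : (P : Set (Set X)).Pairwise Disjoint) (hmeas : ∀ s ∈ P, MeasurableSet s) :
    v (⋃₀ (P : Set (Set X))) = ∑ s ∈ P, v s := by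
  simpa [Set.sUnion_eq_biUnion] using v.of_biUnion_finset hdisj hmeas

namespace IsTotalVariation

variable {X : Type*} [MeasurableSpace X] {ν : ComplexMeasure X} {μ : Measure X}

lemma norm_le (hμ : IsTotalVariation ν μ) {A : Set X} (hA : MeasurableSet A) :
    ‖ν A‖ ≤ (μ A).toReal :=
  (hμ A hA).1 ⟨{A}, by simpa using hA, by simp, by simp, by simp, by simp⟩

lemma sum_norm_le (hμ : IsTotalVariation ν μ) {A : Set X} (hA : MeasurableSet A)
    {P : Finset (Set X)} (hmeas : ∀ s ∈ P, MeasurableSet s)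
    (hdisj : (P : Set (Set X)).Pairwise Disjoint) (hcover : ⋃₀ (P : Set (Set X)) = A) :
    ∑ s ∈ P, ‖ν s‖ ≤ (μ A).toReal :=
  (hμ A hA).1 ⟨P, hmeas, fun _ hs => hcover ▸ Set.subset_sUnion_of_mem hs, hdisj, hcover, rfl⟩

end IsTotalVariation

theorem tendsto_prod_one_add_complexMeasure_atomless_general {X : Type*} [MeasurableSpace X]
    (ν : MeasureTheory.ComplexMeasure X) (μ : MeasureTheory.Measure X)
    [MeasureTheory.IsFiniteMeasure μ] (hμ : IsTotalVariation ν μ)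
    (Part : ℕ → Finset (Set X))
    (hmeas : ∀ n, ∀ P ∈ Part n, MeasurableSet P)
    (hdisj : ∀ n, ∀ P ∈ Part n, ∀ Q ∈ Part n, P ≠ Q → Disjoint P Q)
    (hcover : ∀ n, ⋃₀ (↑(Part n) : Set (Set X)) = Set.univ)
    (hmax : Tendsto (fun n => (Part n).sup fun P => μ P) atTop (nhds 0)) :
    Tendsto (fun n => ∏ P ∈ Part n, (1 + ν P)) atTop (nhds (Complex.exp (ν Set.univ))) := by
  have hsup_ne_top : ∀ n, ((Part n).sup fun P => μ P) ≠ ⊤ := fun n =>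
    ((Finset.sup_lt_iff ENNReal.zero_lt_top).2 fun P _ => measure_lt_top μ P).ne
  refine Complex.tendsto_prod_one_add_of_tendsto_sum (S := (μ Set.univ).toReal) (ε := fun n =>
    ((Part n).sup fun P => μ P).toReal) ?_ (fun n P hP => ?_) (fun n => ?_) ?_
  · exact ENNReal.toReal_zero ▸ (ENNReal.tendsto_toReal ENNReal.zero_ne_top).comp hmax
  · exact (hμ.norm_le (hmeas n P hP)).trans
      (ENNReal.toReal_mono (hsup_ne_top n) (Finset.le_sup (f := fun P => μ P) hP))
  · exact hμ.sum_norm_le MeasurableSet.univ (hmeas n) (hdisj n) (hcover n)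
  · refine tendsto_const_nhds.congr fun n => ?_
    rw [← ν.of_sUnion_finset (hdisj n) (hmeas n), hcover n]

/-- Atomless case of the product-limit lemma: if the total variation `μ = |ν|` has no atoms and
the maximal `|ν|`-mass of a cell tends to `0`, then `∏_{P ∈ 𝒫_n}(1 + ν(P)) → e^{ν(X)}`. -/
theorem tendsto_prod_one_add_complexMeasure_atomless {X : Type*} [MeasurableSpace X]
    [MeasurableSingletonClass X] [MeasurableSpace.CountablySeparated X]
    (ν : MeasureTheory.ComplexMeasure X) (μ : MeasureTheory.Measure X)
    [MeasureTheory.IsFiniteMeasure μ] (hμ : IsTotalVariation ν μ)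
    (hatomless : ∀ a : X, μ {a} = 0)
    (Part : ℕ → Finset (Set X))
    (hmeas : ∀ n, ∀ P ∈ Part n, MeasurableSet P)
    (hdisj : ∀ n, ∀ P ∈ Part n, ∀ Q ∈ Part n, P ≠ Q → Disjoint P Q)
    (hcover : ∀ n, ⋃₀ (↑(Part n) : Set (Set X)) = Set.univ)
    (hrefine : ∀ n, ∀ P ∈ Part (n + 1), ∃ Q ∈ Part n, P ⊆ Q)
    (hsep : ∀ a b : X, a ≠ b → ∃ n, ∃ P ∈ Part n, a ∈ P ∧ b ∉ P)
    (hmax : Tendsto (fun n => (Part n).sup fun P => μ P) atTop (nhds 0)) :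
    Tendsto (fun n => ∏ P ∈ Part n, (1 + ν P)) atTop (nhds (Complex.exp (ν Set.univ))) :=
  tendsto_prod_one_add_complexMeasure_atomless_general ν μ hμ Part hmeas hdisj hcover hmax
end

section
/- Let ν be a finite (positive) measure on a countably separated measurable space with dissecting system (𝒫_n), and for each cell P choose a_P ∈ P maximizing ν({p}) over p ∈ P. Then max_{P∈𝒫_n} ν(P ∖ {a_P}) decreases to 0 as n → ∞. -/
/-!
Removing a heaviest point of a cell `P` costs at least as much mass as removing any point `b`
from a superset `Q ⊇ P`, since `ν {a_P} ≥ ν ({b} ∩ P)`; hence the maximum over the cells of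
`𝒫_n` is antitone. If it stayed above some `ε > 0`, König's lemma on the finitely branching tree
of cells would give a decreasing chain of cells `Q_n` with `ν (Q_n \ {a_{Q_n}}) ≥ ε` for all `n`.
As the partitions separate points, `⋂ Q_n` has at most one point `x`, and
`ν (Q_n \ {a_{Q_n}}) ≤ ν (Q_n \ {x}) → 0` by continuity from above.
-/

open Filter MeasureTheory Set

section HeaviestPoint

variable {X : Type*} [MeasurableSpace X] [MeasurableSingletonClass X] {ν : Measure X}
  [IsFiniteMeasure ν]

lemma measure_diff_heaviest_le_measure_diff_singleton {P Q : Set X} {a : X} (hPQ : P ⊆ Q)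
    (ha : a ∈ P) (hmax : ∀ p ∈ P, ν {p} ≤ ν {a}) (b : X) : ν (P \ {a}) ≤ ν (Q \ {b}) := by
  by_cases hb : b ∈ P
  · calc ν (P \ {a}) = ν P - ν {a} :=
          measure_sdiff (singleton_subset_iff.2 ha) (measurableSet_singleton a).nullMeasurableSet
            (measure_ne_top ν _)
      _ ≤ ν P - ν {b} := tsub_le_tsub_left (hmax b hb) _
      _ ≤ ν (P \ {b}) := le_measure_sdiff
      _ ≤ ν (Q \ {b}) := measure_mono (sdiff_subset_sdiff_left hPQ)
  · exact measure_mono fun x hx => ⟨hPQ hx.1, fun hxb => hb (hxb ▸ hx.1)⟩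

lemma tendsto_measure_diff_heaviest_of_antitone {Q : ℕ → Set X} (hQ : ∀ n, MeasurableSet (Q n))
    (hanti : Antitone Q) (hK : (⋂ n, Q n).Subsingleton) {b : ℕ → X} (hb : ∀ n, b n ∈ Q n)
    (hmax : ∀ n, ∀ q ∈ Q n, ν {q} ≤ ν {b n}) :
    Tendsto (fun n => ν (Q n \ {b n})) atTop (nhds 0) := by
  set K := ⋂ n, Q n
  have hle : ∀ n, ν (Q n \ {b n}) ≤ ν (Q n \ K) := fun n => by
    rcases hK.eq_empty_or_singleton with hK | ⟨x, hK⟩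
    · rw [hK, sdiff_empty]
      exact measure_mono sdiff_subset
    · rw [hK]
      exact measure_diff_heaviest_le_measure_diff_singleton subset_rfl (hb n) (hmax n) x
  have hempty : ⋂ n, (Q n \ K) = ∅ :=
    eq_empty_of_forall_notMem fun y hy =>
      (mem_iInter.1 hy 0).2 (mem_iInter.2 fun n => (mem_iInter.1 hy n).1)
  have hlim : Tendsto (fun n => ν (Q n \ K)) atTop (nhds 0) := by
    simpa [Function.comp_def, hempty] using tendsto_measure_iInter_atTop
      (fun n => ((hQ n).diff hK.measurableSet).nullMeasurableSet)
      (fun m n hmn => sdiff_subset_sdiff_left (hanti hmn)) ⟨0, measure_ne_top ν _⟩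
  exact tendsto_of_tendsto_of_tendsto_of_le_of_le tendsto_const_nhds hlim (fun _ => zero_le) hle

end HeaviestPoint

section Cells

variable {X : Type*} {Part : ℕ → Finset (Set X)}

lemma cell_eq_of_mem (hdisj : ∀ n, ∀ P ∈ Part n, ∀ Q ∈ Part n, P ≠ Q → Disjoint P Q) {n : ℕ}
    {P Q : Set X} (hP : P ∈ Part n) (hQ : Q ∈ Part n) {x : X} (hxP : x ∈ P) (hxQ : x ∈ Q) :
    P = Q := by
  by_contra hPQ
  exact disjoint_left.1 (hdisj n P hP Q hQ hPQ) hxP hxQ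

lemma exists_cell_superset_of_le (hrefine : ∀ n, ∀ P ∈ Part (n + 1), ∃ Q ∈ Part n, P ⊆ Q)
    {n m : ℕ} (hnm : n ≤ m) {P : Set X} (hP : P ∈ Part m) : ∃ Q ∈ Part n, P ⊆ Q := by
  induction m, hnm using Nat.le_induction generalizing P with
  | base => exact ⟨P, hP, subset_rfl⟩
  | succ m _ ih =>
    obtain ⟨R, hR, hPR⟩ := hrefine m P hP
    obtain ⟨Q, hQ, hRQ⟩ := ih hR
    exact ⟨Q, hQ, hPR.trans hRQ⟩

lemma cell_subset_of_le (hdisj : ∀ n, ∀ P ∈ Part n, ∀ Q ∈ Part n, P ≠ Q → Disjoint P Q)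
    (hrefine : ∀ n, ∀ P ∈ Part (n + 1), ∃ Q ∈ Part n, P ⊆ Q) {n m : ℕ} (hnm : n ≤ m)
    {P Q : Set X} (hP : P ∈ Part m) (hQ : Q ∈ Part n) {x : X} (hxP : x ∈ P) (hxQ : x ∈ Q) :
    P ⊆ Q := by
  obtain ⟨R, hR, hPR⟩ := exists_cell_superset_of_le hrefine hnm hP
  exact cell_eq_of_mem hdisj hR hQ (hPR hxP) hxQ ▸ hPR

lemma iInter_cells_subsingleton (hdisj : ∀ n, ∀ P ∈ Part n, ∀ Q ∈ Part n, P ≠ Q → Disjoint P Q)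
    (hsep : ∀ a b : X, a ≠ b → ∃ n, ∃ P ∈ Part n, a ∈ P ∧ b ∉ P) {Q : ℕ → Set X}
    (hQ : ∀ n, Q n ∈ Part n) : (⋂ n, Q n).Subsingleton := by
  intro x hx y hy
  by_contra hxy
  obtain ⟨n, P, hP, hxP, hyP⟩ := hsep x y hxy
  exact hyP (cell_eq_of_mem hdisj hP (hQ n) hxP (mem_iInter.1 hx n) ▸ mem_iInter.1 hy n)

/-- König's lemma for the tree of cells. -/
lemma exists_antitone_cells_frequently_mem
    (hdisj : ∀ n, ∀ P ∈ Part n, ∀ Q ∈ Part n, P ≠ Q → Disjoint P Q)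
    (hcover : ∀ n, ⋃₀ (↑(Part n) : Set (Set X)) = univ)
    (hrefine : ∀ n, ∀ P ∈ Part (n + 1), ∃ Q ∈ Part n, P ⊆ Q) (x : ℕ → X) :
    ∃ Q : ℕ → Set X, (∀ n, Q n ∈ Part n) ∧ Antitone Q ∧ ∀ n, ∃ m ≥ n, x m ∈ Q n := by
  -- The branch follows a free ultrafilter: at each level, one of the finitely many cells
  -- contains `x m` for `U`-almost every `m`.
  set U : Ultrafilter ℕ := Ultrafilter.of atTop
  have hlevel : ∀ n, ∃ Q ∈ Part n, ∀ᶠ m in (U : Filter ℕ), x m ∈ Q := fun n =>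
    (Ultrafilter.finite_sUnion_mem_iff (Part n).finite_toSet).1
      (by rw [hcover n]; exact univ_mem : ⋃₀ (↑(Part n) : Set (Set X)) ∈ U.map x)
  choose Q hQ hev using hlevel
  refine ⟨Q, hQ, antitone_nat_of_succ_le fun n => ?_, fun n => ?_⟩
  · obtain ⟨m, hm₁, hm₀⟩ := ((hev (n + 1)).and (hev n)).exists
    exact cell_subset_of_le hdisj hrefine n.le_succ (hQ _) (hQ n) hm₁ hm₀
  · exact (((eventually_ge_atTop n).filter_mono (Ultrafilter.of_le _)).and (hev n)).exists

end Cells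

theorem tendsto_sup_measure_cell_diff_maximal_point_general {X : Type*} [MeasurableSpace X]
    [MeasurableSingletonClass X]
    (ν : MeasureTheory.Measure X) [MeasureTheory.IsFiniteMeasure ν]
    (Part : ℕ → Finset (Set X))
    (hmeas : ∀ n, ∀ P ∈ Part n, MeasurableSet P)
    (hdisj : ∀ n, ∀ P ∈ Part n, ∀ Q ∈ Part n, P ≠ Q → Disjoint P Q)
    (hcover : ∀ n, ⋃₀ (↑(Part n) : Set (Set X)) = Set.univ)
    (hrefine : ∀ n, ∀ P ∈ Part (n + 1), ∃ Q ∈ Part n, P ⊆ Q)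
    (hsep : ∀ a b : X, a ≠ b → ∃ n, ∃ P ∈ Part n, a ∈ P ∧ b ∉ P)
    (a : Set X → X)
    (ha : ∀ n, ∀ P ∈ Part n, a P ∈ P ∧ ∀ p ∈ P, ν {p} ≤ ν {a P}) :
    Antitone (fun n => (Part n).sup fun P => ν (P \ {a P})) ∧
      Tendsto (fun n => (Part n).sup fun P => ν (P \ {a P})) atTop (nhds 0) := by
  set s := fun n => (Part n).sup fun P => ν (P \ {a P})
  have hcell_le : ∀ {m P Q}, P ∈ Part m → P ⊆ Q → ν (P \ {a P}) ≤ ν (Q \ {a Q}) := fun hP hPQ =>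
    measure_diff_heaviest_le_measure_diff_singleton hPQ (ha _ _ hP).1 (ha _ _ hP).2 _
  have hanti : Antitone s := antitone_nat_of_succ_le fun n => Finset.sup_le fun P hP => by
    obtain ⟨Q, hQ, hPQ⟩ := hrefine n P hP
    exact (hcell_le hP hPQ).trans (Finset.le_sup (f := fun P => ν (P \ {a P})) hQ)
  refine ⟨hanti, ?_⟩
  suffices hinf : ⨅ n, s n = 0 by simpa [hinf] using tendsto_atTop_iInf hanti
  set ε := ⨅ n, s n
  by_contra! hε
  have hheavy : ∀ m, ∃ P ∈ Part m, ε ≤ ν (P \ {a P}) := fun m =>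
    (Finset.le_sup_iff (pos_iff_ne_zero.2 hε)).1 (iInf_le s m)
  choose P hP hPε using hheavy
  obtain ⟨Q, hQ, hQanti, hfreq⟩ :=
    exists_antitone_cells_frequently_mem hdisj hcover hrefine fun m => a (P m)
  have hQε : ∀ n, ε ≤ ν (Q n \ {a (Q n)}) := fun n => by
    obtain ⟨m, hnm, hm⟩ := hfreq n
    exact (hPε m).trans <| hcell_le (hP m) <|
      cell_subset_of_le hdisj hrefine hnm (hP m) (hQ n) (ha m _ (hP m)).1 hm
  have hlim := tendsto_measure_diff_heaviest_of_antitone (fun n => hmeas n _ (hQ n)) hQanti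
    (iInter_cells_subsingleton hdisj hsep hQ) (fun n => (ha n _ (hQ n)).1)
    (fun n => (ha n _ (hQ n)).2)
  exact hε (nonpos_iff_eq_zero.1 (ge_of_tendsto' hlim hQε))

/-- For a finite measure `ν` on a countably separated space with a dissecting system `(𝒫_n)` and
`a_P ∈ P` a point of maximal `ν`-mass in each cell `P`, the quantity
`max_{P ∈ 𝒫_n} ν(P ∖ {a_P})` decreases to `0` as `n → ∞`. -/
theorem tendsto_sup_measure_cell_diff_maximal_point {X : Type*} [MeasurableSpace X]
    [MeasurableSingletonClass X] [MeasurableSpace.CountablySeparated X]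
    (ν : MeasureTheory.Measure X) [MeasureTheory.IsFiniteMeasure ν]
    (Part : ℕ → Finset (Set X))
    (hmeas : ∀ n, ∀ P ∈ Part n, MeasurableSet P)
    (hdisj : ∀ n, ∀ P ∈ Part n, ∀ Q ∈ Part n, P ≠ Q → Disjoint P Q)
    (hcover : ∀ n, ⋃₀ (↑(Part n) : Set (Set X)) = Set.univ)
    (hrefine : ∀ n, ∀ P ∈ Part (n + 1), ∃ Q ∈ Part n, P ⊆ Q)
    (hsep : ∀ a b : X, a ≠ b → ∃ n, ∃ P ∈ Part n, a ∈ P ∧ b ∉ P)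
    (a : Set X → X)
    (ha : ∀ n, ∀ P ∈ Part n, a P ∈ P ∧ ∀ p ∈ P, ν {p} ≤ ν {a P}) :
    Antitone (fun n => (Part n).sup fun P => ν (P \ {a P})) ∧
      Tendsto (fun n => (Part n).sup fun P => ν (P \ {a P})) atTop (nhds 0) :=
  tendsto_sup_measure_cell_diff_maximal_point_general ν Part hmeas hdisj hcover hrefine hsep a ha
end

section
/- Let H be a Hilbert space, Ω ∈ H of norm one, and let x, y be von Neumann algebras on H such that every X ∈ x commutes with every Y ∈ y on the closed subspace generated by (x ∨ y)Ω, and ⟨Ω, XYΩ⟩ = ⟨Ω, XΩ⟩⟨Ω, YΩ⟩ for all X ∈ x, Y ∈ y. Then the orthogonal projection onto ℂΩ equals the product [cl(xΩ)] · [cl(yΩ)] of the orthogonal projections onto the closures of xΩ and yΩ. -/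
open scoped ComplexInnerProductSpace
open InnerProductSpace Submodule

/-
Taking `X*` in place of `X`, the factorization `⟨Ω, XYΩ⟩ = ⟨Ω, XΩ⟩⟨Ω, YΩ⟩` says that
`YΩ - ⟨Ω, YΩ⟩Ω` is orthogonal to `xΩ`, i.e. `[cl(xΩ)] YΩ = ⟨Ω, YΩ⟩Ω`. By continuity
`[cl(xΩ)]` agrees with `|Ω⟩⟨Ω|` on all of `cl(yΩ)`, and `⟨Ω, [cl(yΩ)] v⟩ = ⟨Ω, v⟩` because
`Ω ∈ cl(yΩ)`.
-/

section StarProjection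

variable {𝕜 E : Type*} [RCLike 𝕜] [NormedAddCommGroup E] [InnerProductSpace 𝕜 E]
  [CompleteSpace E]

theorem ContinuousLinearMap.eq_starProjection_of_range_eq {P : E →L[𝕜] E}
    (hsa : IsSelfAdjoint P) (hidem : P ∘L P = P) {K : Submodule 𝕜 E}
    [K.HasOrthogonalProjection] (hK : LinearMap.range (P : E →ₗ[𝕜] E) = K) :
    P = K.starProjection := by
  obtain ⟨_, hP⟩ := isStarProjection_iff_eq_starProjection_range.mp ⟨hidem, hsa⟩
  subst hK
  exact hP

end StarProjection

section CyclicSubspace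

variable {H : Type*} [NormedAddCommGroup H] [InnerProductSpace ℂ H] [CompleteSpace H]

def cyclicSubspace (A : StarSubalgebra ℂ (H →L[ℂ] H)) (Ω : H) : Submodule ℂ H :=
  (span ℂ {w : H | ∃ X ∈ A, w = X Ω}).topologicalClosure

instance (A : StarSubalgebra ℂ (H →L[ℂ] H)) (Ω : H) :
    (cyclicSubspace A Ω).HasOrthogonalProjection := by
  unfold cyclicSubspace
  infer_instance

theorem self_mem_cyclicSubspace (A : StarSubalgebra ℂ (H →L[ℂ] H)) (Ω : H) :
    Ω ∈ cyclicSubspace A Ω :=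
  le_topologicalClosure _ (subset_span ⟨1, A.one_mem, rfl⟩)

variable {A B : StarSubalgebra ℂ (H →L[ℂ] H)} {Ω : H}

theorem cyclicSubspace_le {K : Submodule ℂ H} (hK : IsClosed (K : Set H))
    (h : ∀ X ∈ A, X Ω ∈ K) : cyclicSubspace A Ω ≤ K :=
  topologicalClosure_minimal _ (span_le.mpr <| by rintro _ ⟨X, hX, rfl⟩; exact h X hX) hK

theorem inner_apply_eq_of_factorizes
    (hfact : ∀ X ∈ A, ∀ Y ∈ B, ⟪Ω, X (Y Ω)⟫ = ⟪Ω, X Ω⟫ * ⟪Ω, Y Ω⟫)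
    {X Y : H →L[ℂ] H} (hX : X ∈ A) (hY : Y ∈ B) :
    ⟪X Ω, Y Ω⟫ = ⟪X Ω, Ω⟫ * ⟪Ω, Y Ω⟫ := by
  have h := hfact (star X) (star_mem hX) Y hY
  rwa [ContinuousLinearMap.star_eq_adjoint, ContinuousLinearMap.adjoint_inner_right,
    ContinuousLinearMap.adjoint_inner_right] at h

theorem starProjection_cyclicSubspace_apply_of_factorizes
    (hfact : ∀ X ∈ A, ∀ Y ∈ B, ⟪Ω, X (Y Ω)⟫ = ⟪Ω, X Ω⟫ * ⟪Ω, Y Ω⟫)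
    {Y : H →L[ℂ] H} (hY : Y ∈ B) :
    (cyclicSubspace A Ω).starProjection (Y Ω) = ⟪Ω, Y Ω⟫ • Ω := by
  refine eq_starProjection_of_mem_of_inner_eq_zero
    (smul_mem _ _ (self_mem_cyclicSubspace A Ω)) fun w hw => ?_
  have hperp : cyclicSubspace A Ω ≤ (span ℂ {Y Ω - ⟪Ω, Y Ω⟫ • Ω})ᗮ := by
    refine cyclicSubspace_le (isClosed_orthogonal _) fun X hX => ?_
    rw [mem_orthogonal_singleton_iff_inner_left, inner_sub_right, inner_smul_right,
      inner_apply_eq_of_factorizes hfact hX hY]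
    ring
  exact inner_right_of_mem_orthogonal (mem_span_singleton_self _) (hperp hw)

theorem starProjection_comp_starProjection_eq_rankOne_of_factorizes
    (hfact : ∀ X ∈ A, ∀ Y ∈ B, ⟪Ω, X (Y Ω)⟫ = ⟪Ω, X Ω⟫ * ⟪Ω, Y Ω⟫) :
    (cyclicSubspace A Ω).starProjection ∘L (cyclicSubspace B Ω).starProjection =
      rankOne ℂ Ω Ω := by
  set T := (cyclicSubspace A Ω).starProjection - rankOne ℂ Ω Ω
  have hT : cyclicSubspace B Ω ≤ LinearMap.ker (T : H →ₗ[ℂ] H) :=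
    cyclicSubspace_le (ContinuousLinearMap.isClosed_ker T) fun Y hY => by
      simp [T, starProjection_cyclicSubspace_apply_of_factorizes hfact hY]
  ext v
  have hv : T ((cyclicSubspace B Ω).starProjection v) = 0 := hT (starProjection_apply_mem _ v)
  rw [sub_apply, sub_eq_zero] at hv
  rw [ContinuousLinearMap.comp_apply, hv, rankOne_apply, rankOne_apply,
    ← inner_starProjection_left_eq_right,
    starProjection_eq_self_iff.mpr (self_mem_cyclicSubspace B Ω)]

end CyclicSubspace

theorem rankOne_proj_eq_proj_mul_proj_of_indep_general {H : Type*} [NormedAddCommGroup H]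
    [InnerProductSpace ℂ H] [CompleteSpace H]
    (Ω : H) (x y : VonNeumannAlgebra H)
    (hfact : ∀ X ∈ x, ∀ Y ∈ y, ⟪Ω, X (Y Ω)⟫ = ⟪Ω, X Ω⟫ * ⟪Ω, Y Ω⟫)
    (Px Py : H →L[ℂ] H)
    (hPx : IsSelfAdjoint Px ∧ Px ∘L Px = Px ∧
      LinearMap.range (Px : H →ₗ[ℂ] H) = (Submodule.span ℂ {w : H | ∃ X ∈ x, w = X Ω}).topologicalClosure)
    (hPy : IsSelfAdjoint Py ∧ Py ∘L Py = Py ∧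
      LinearMap.range (Py : H →ₗ[ℂ] H) = (Submodule.span ℂ {w : H | ∃ Y ∈ y, w = Y Ω}).topologicalClosure) :
    ∀ v : H, Px (Py v) = ⟪Ω, v⟫ • Ω := by
  obtain ⟨hPx_sa, hPx_idem, hPx_range⟩ := hPx
  obtain ⟨hPy_sa, hPy_idem, hPy_range⟩ := hPy
  have hPx_eq : Px = (cyclicSubspace x.toStarSubalgebra Ω).starProjection :=
    ContinuousLinearMap.eq_starProjection_of_range_eq hPx_sa hPx_idem hPx_range
  have hPy_eq : Py = (cyclicSubspace y.toStarSubalgebra Ω).starProjection :=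
    ContinuousLinearMap.eq_starProjection_of_range_eq hPy_sa hPy_idem hPy_range
  intro v
  simpa [hPx_eq, hPy_eq] using congrArg (· v)
    (starProjection_comp_starProjection_eq_rankOne_of_factorizes hfact)

/-- Independence implies product of projections: if the von Neumann algebras `x` and `y` commute
on `cl((x ∨ y)Ω)` and `⟨Ω, XYΩ⟩ = ⟨Ω, XΩ⟩⟨Ω, YΩ⟩` for all `X ∈ x`, `Y ∈ y`, then the rank-one
projection onto `ℂΩ` equals `[cl(xΩ)]·[cl(yΩ)]`. -/
theorem rankOne_proj_eq_proj_mul_proj_of_indep {H : Type*} [NormedAddCommGroup H]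
    [InnerProductSpace ℂ H] [CompleteSpace H]
    (Ω : H) (hΩ : ‖Ω‖ = 1) (x y : VonNeumannAlgebra H)
    (hcomm : ∀ X ∈ x, ∀ Y ∈ y, ∀ v ∈
      (Submodule.span ℂ {w : H | ∃ Z ∈ Set.centralizer (Set.centralizer
          ((x : Set (H →L[ℂ] H)) ∪ (y : Set (H →L[ℂ] H)))), w = Z Ω}).topologicalClosure,
      X (Y v) = Y (X v))
    (hfact : ∀ X ∈ x, ∀ Y ∈ y, ⟪Ω, X (Y Ω)⟫ = ⟪Ω, X Ω⟫ * ⟪Ω, Y Ω⟫)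
    (Px Py : H →L[ℂ] H)
    (hPx : IsSelfAdjoint Px ∧ Px ∘L Px = Px ∧
      LinearMap.range (Px : H →ₗ[ℂ] H) = (Submodule.span ℂ {w : H | ∃ X ∈ x, w = X Ω}).topologicalClosure)
    (hPy : IsSelfAdjoint Py ∧ Py ∘L Py = Py ∧
      LinearMap.range (Py : H →ₗ[ℂ] H) = (Submodule.span ℂ {w : H | ∃ Y ∈ y, w = Y Ω}).topologicalClosure) :
    ∀ v : H, Px (Py v) = ⟪Ω, v⟫ • Ω :=
  rankOne_proj_eq_proj_mul_proj_of_indep_general Ω x y hfact Px Py hPx hPy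
end

section
/- Let H be a Hilbert space, Ω a unit vector, and x, y von Neumann algebras on H with x and y commuting on cl((x∨y)Ω) and with |Ω⟩⟨Ω| = [cl(xΩ)][cl(yΩ)]. Then for all X ∈ x and Y ∈ y, ⟨Ω, XYΩ⟩ = ⟨Ω, XΩ⟩⟨Ω, YΩ⟩. -/
open scoped ComplexInnerProductSpace InnerProductSpace

section

variable {𝕜 E : Type*} [RCLike 𝕜] [NormedAddCommGroup E] [InnerProductSpace 𝕜 E]

theorem ContinuousLinearMap.apply_mem_closure_span_apply {S : Set (E →L[𝕜] E)} {A : E →L[𝕜] E}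
    (hA : A ∈ S) (v : E) :
    A v ∈ (Submodule.span 𝕜 {w : E | ∃ B ∈ S, w = B v}).topologicalClosure :=
  Submodule.le_topologicalClosure _ (Submodule.subset_span ⟨A, hA, rfl⟩)

theorem ContinuousLinearMap.apply_eq_self_of_mem_range {P : E →L[𝕜] E} (hP : P ∘L P = P) {v : E}
    (hv : v ∈ LinearMap.range (P : E →ₗ[𝕜] E)) : P v = v :=
  (LinearMap.IsIdempotentElem.mem_range_iff (IsIdempotentElem.toLinearMap hP)).mp hv

variable [CompleteSpace E]

theorem ContinuousLinearMap.star_inner_left (A : E →L[𝕜] E) (u v : E) :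
    ⟪star A u, v⟫_𝕜 = ⟪u, A v⟫_𝕜 := by
  rw [star_eq_adjoint, adjoint_inner_left]

theorem inner_eq_inner_mul_inner_of_comp_eq_rankOne {P Q : E →L[𝕜] E} (hP : IsSelfAdjoint P)
    {Ω : E} (hPQ : ∀ v, P (Q v) = ⟪Ω, v⟫_𝕜 • Ω) {u w : E} (hu : P u = u) (hw : Q w = w) :
    ⟪u, w⟫_𝕜 = ⟪u, Ω⟫_𝕜 * ⟪Ω, w⟫_𝕜 :=
  calc ⟪u, w⟫_𝕜 = ⟪P u, Q w⟫_𝕜 := by rw [hu, hw]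
    _ = ⟪u, P (Q w)⟫_𝕜 := hP.isSymmetric u (Q w)
    _ = ⟪u, Ω⟫_𝕜 * ⟪Ω, w⟫_𝕜 := by rw [hPQ, inner_smul_right, mul_comm]

end

theorem indep_of_rankOne_proj_eq_proj_mul_proj_general {H : Type*} [NormedAddCommGroup H]
    [InnerProductSpace ℂ H] [CompleteSpace H]
    (Ω : H) (x y : VonNeumannAlgebra H)
    (Px Py : H →L[ℂ] H)
    (hPx : IsSelfAdjoint Px ∧ Px ∘L Px = Px ∧
      LinearMap.range (Px : H →ₗ[ℂ] H) = (Submodule.span ℂ {w : H | ∃ X ∈ x, w = X Ω}).topologicalClosure)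
    (hPy : IsSelfAdjoint Py ∧ Py ∘L Py = Py ∧
      LinearMap.range (Py : H →ₗ[ℂ] H) = (Submodule.span ℂ {w : H | ∃ Y ∈ y, w = Y Ω}).topologicalClosure)
    (hprod : ∀ v : H, Px (Py v) = ⟪Ω, v⟫ • Ω) :
    ∀ X ∈ x, ∀ Y ∈ y, ⟪Ω, X (Y Ω)⟫ = ⟪Ω, X Ω⟫ * ⟪Ω, Y Ω⟫ := by
  intro X hX Y hY
  obtain ⟨hPx_sa, hPx_idem, hPx_range⟩ := hPx
  obtain ⟨-, hPy_idem, hPy_range⟩ := hPy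
  have hXΩ : Px (star X Ω) = star X Ω :=
    Px.apply_eq_self_of_mem_range hPx_idem
      (hPx_range ▸ ContinuousLinearMap.apply_mem_closure_span_apply (star_mem hX) Ω)
  have hYΩ : Py (Y Ω) = Y Ω :=
    Py.apply_eq_self_of_mem_range hPy_idem
      (hPy_range ▸ ContinuousLinearMap.apply_mem_closure_span_apply hY Ω)
  calc ⟪Ω, X (Y Ω)⟫ = ⟪star X Ω, Y Ω⟫ := (X.star_inner_left Ω (Y Ω)).symm
    _ = ⟪star X Ω, Ω⟫ * ⟪Ω, Y Ω⟫ :=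
      inner_eq_inner_mul_inner_of_comp_eq_rankOne hPx_sa hprod hXΩ hYΩ
    _ = ⟪Ω, X Ω⟫ * ⟪Ω, Y Ω⟫ := by rw [X.star_inner_left]

/-- Product of projections implies independence: if the von Neumann algebras `x` and `y` commute
on `cl((x ∨ y)Ω)` and `|Ω⟩⟨Ω| = [cl(xΩ)][cl(yΩ)]`, then
`⟨Ω, XYΩ⟩ = ⟨Ω, XΩ⟩⟨Ω, YΩ⟩` for all `X ∈ x`, `Y ∈ y`. -/
theorem indep_of_rankOne_proj_eq_proj_mul_proj {H : Type*} [NormedAddCommGroup H]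
    [InnerProductSpace ℂ H] [CompleteSpace H]
    (Ω : H) (hΩ : ‖Ω‖ = 1) (x y : VonNeumannAlgebra H)
    (hcomm : ∀ X ∈ x, ∀ Y ∈ y, ∀ v ∈
      (Submodule.span ℂ {w : H | ∃ Z ∈ Set.centralizer (Set.centralizer
          ((x : Set (H →L[ℂ] H)) ∪ (y : Set (H →L[ℂ] H)))), w = Z Ω}).topologicalClosure,
      X (Y v) = Y (X v))
    (Px Py : H →L[ℂ] H)
    (hPx : IsSelfAdjoint Px ∧ Px ∘L Px = Px ∧
      LinearMap.range (Px : H →ₗ[ℂ] H) = (Submodule.span ℂ {w : H | ∃ X ∈ x, w = X Ω}).topologicalClosure)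
    (hPy : IsSelfAdjoint Py ∧ Py ∘L Py = Py ∧
      LinearMap.range (Py : H →ₗ[ℂ] H) = (Submodule.span ℂ {w : H | ∃ Y ∈ y, w = Y Ω}).topologicalClosure)
    (hprod : ∀ v : H, Px (Py v) = ⟪Ω, v⟫ • Ω) :
    ∀ X ∈ x, ∀ Y ∈ y, ⟪Ω, X (Y Ω)⟫ = ⟪Ω, X Ω⟫ * ⟪Ω, Y Ω⟫ :=
  indep_of_rankOne_proj_eq_proj_mul_proj_general Ω x y Px Py hPx hPy hprod
end

section
/- Let H be a Hilbert space, Ω a unit vector, and x, y self-adjoint multiplicative subsets of B(H) containing the identity such that XYΩ = YXΩ and ⟨Ω, XYΩ⟩ = ⟨Ω, XΩ⟩⟨Ω, YΩ⟩ for all X ∈ x, Y ∈ y. Then for all n, all X, X₁,…,Xₙ ∈ x and all Y, Y₁,…,Yₙ ∈ y: XY(XₙYₙ⋯X₁Y₁Ω) = YX(XₙYₙ⋯X₁Y₁Ω). -/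
/-!
If `S` and `T` are monoids of operators with `a b Ω = b a Ω` for `a ∈ S`, `b ∈ T`, then
`a b (A B Ω) = (a A)(b B) Ω`: move `A` past `B`, then past `b B`. Hence every word
`XₙYₙ⋯X₁Y₁Ω` is of the form `A B Ω` with `A ∈ S`, `B ∈ T`, and on such a vector
`X Y (A B Ω) = (X A)(Y B) Ω = (Y B)(X A) Ω = Y X (B A Ω) = Y X (A B Ω)`.
-/

open scoped ComplexInnerProductSpace
open scoped Pointwise

section CommuteAt

variable {M α : Type*} [Monoid M] [MulAction M α]

def CommuteAt (S T : Submonoid M) (v : α) : Prop :=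
  ∀ a ∈ S, ∀ b ∈ T, a • b • v = b • a • v

variable {S T : Submonoid M} {v : α}

theorem CommuteAt.symm (h : CommuteAt S T v) : CommuteAt T S v :=
  fun b hb a ha => (h a ha b hb).symm

theorem CommuteAt.smul_smul_smul_smul (h : CommuteAt S T v)
    (a : M) {A : M} (hA : A ∈ S) {b B : M} (hb : b ∈ T) (hB : B ∈ T) :
    a • b • A • B • v = (a * A) • (b * B) • v := by
  rw [h A hA B hB, ← mul_smul b B, ← h A hA _ (T.mul_mem hb hB), mul_smul a A]

theorem CommuteAt.exists_prod_smul_eq (h : CommuteAt S T v) (l : List M)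
    (hl : ∀ m ∈ l, m ∈ (S : Set M) * T) : ∃ A ∈ S, ∃ B ∈ T, l.prod • v = A • B • v := by
  induction l with
  | nil => exact ⟨1, S.one_mem, 1, T.one_mem, by simp⟩
  | cons m l ih =>
    obtain ⟨a, ha, b, hb, rfl⟩ := Set.mem_mul.mp (hl m List.mem_cons_self)
    obtain ⟨A, hA, B, hB, hAB⟩ := ih fun m hm => hl m (List.mem_cons_of_mem _ hm)
    refine ⟨a * A, S.mul_mem ha hA, b * B, T.mul_mem hb hB, ?_⟩
    rw [List.prod_cons, mul_smul, hAB, mul_smul, h.smul_smul_smul_smul a hA hb hB]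

theorem CommuteAt.smul_smul {A B : M} (h : CommuteAt S T v) (hA : A ∈ S)
    (hB : B ∈ T) : CommuteAt S T (A • B • v) := by
  intro a ha b hb
  calc a • b • A • B • v = (a * A) • (b * B) • v := h.smul_smul_smul_smul a hA hb hB
    _ = (b * B) • (a * A) • v := h _ (S.mul_mem ha hA) _ (T.mul_mem hb hB)
    _ = b • a • B • A • v := (h.symm.smul_smul_smul_smul b hB ha hA).symm
    _ = b • a • A • B • v := by rw [h A hA B hB]

end CommuteAt

theorem commute_on_words_of_indep_general {H : Type*} [NormedAddCommGroup H]
    [InnerProductSpace ℂ H]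
    (Ω : H) (x y : Set (H →L[ℂ] H))
    (hx1 : (1 : H →L[ℂ] H) ∈ x) (hy1 : (1 : H →L[ℂ] H) ∈ y)
    (hxmul : ∀ X₁ ∈ x, ∀ X₂ ∈ x, X₁ ∘L X₂ ∈ x)
    (hymul : ∀ Y₁ ∈ y, ∀ Y₂ ∈ y, Y₁ ∘L Y₂ ∈ y)
    (hcomm : ∀ X ∈ x, ∀ Y ∈ y, X (Y Ω) = Y (X Ω)) :
    ∀ (n : ℕ) (X Y : H →L[ℂ] H), X ∈ x → Y ∈ y →
      ∀ (Xs Ys : Fin n → H →L[ℂ] H), (∀ i, Xs i ∈ x) → (∀ i, Ys i ∈ y) →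
        X (Y ((List.ofFn fun i => Xs i ∘L Ys i).prod Ω)) =
          Y (X ((List.ofFn fun i => Xs i ∘L Ys i).prod Ω)) := by
  intro n X Y hX hY Xs Ys hXs hYs
  let S : Submonoid (H →L[ℂ] H) := ⟨⟨x, fun ha hb => hxmul _ ha _ hb⟩, hx1⟩
  let T : Submonoid (H →L[ℂ] H) := ⟨⟨y, fun ha hb => hymul _ ha _ hb⟩, hy1⟩
  have hΩ : CommuteAt S T Ω := hcomm
  have hword : ∀ m ∈ List.ofFn fun i => Xs i * Ys i, m ∈ (S : Set (H →L[ℂ] H)) * T := by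
    simp only [List.mem_ofFn, forall_exists_index]
    rintro _ i rfl
    exact Set.mul_mem_mul (hXs i) (hYs i)
  obtain ⟨A, hA, B, hB, hAB⟩ := hΩ.exists_prod_smul_eq _ hword
  have hcommute := hΩ.smul_smul hA hB X hX Y hY
  rw [← hAB] at hcommute
  exact hcommute

/-- Raising independence from multiplicative sets: if `x, y ⊆ B(H)` are self-adjoint
multiplicative sets containing `1` with `XYΩ = YXΩ` and
`⟨Ω, XYΩ⟩ = ⟨Ω, XΩ⟩⟨Ω, YΩ⟩` for all `X ∈ x`, `Y ∈ y`, then for all `n` and all words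
`XₙYₙ⋯X₁Y₁Ω`, any `X ∈ x` and `Y ∈ y` commute on that vector. -/
theorem commute_on_words_of_indep {H : Type*} [NormedAddCommGroup H]
    [InnerProductSpace ℂ H] [CompleteSpace H]
    (Ω : H) (hΩ : ‖Ω‖ = 1) (x y : Set (H →L[ℂ] H))
    (hx1 : (1 : H →L[ℂ] H) ∈ x) (hy1 : (1 : H →L[ℂ] H) ∈ y)
    (hxadj : ∀ X ∈ x, ContinuousLinearMap.adjoint X ∈ x)
    (hyadj : ∀ Y ∈ y, ContinuousLinearMap.adjoint Y ∈ y)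
    (hxmul : ∀ X₁ ∈ x, ∀ X₂ ∈ x, X₁ ∘L X₂ ∈ x)
    (hymul : ∀ Y₁ ∈ y, ∀ Y₂ ∈ y, Y₁ ∘L Y₂ ∈ y)
    (hcomm : ∀ X ∈ x, ∀ Y ∈ y, X (Y Ω) = Y (X Ω))
    (hfact : ∀ X ∈ x, ∀ Y ∈ y, ⟪Ω, X (Y Ω)⟫ = ⟪Ω, X Ω⟫ * ⟪Ω, Y Ω⟫) :
    ∀ (n : ℕ) (X Y : H →L[ℂ] H), X ∈ x → Y ∈ y →
      ∀ (Xs Ys : Fin n → H →L[ℂ] H), (∀ i, Xs i ∈ x) → (∀ i, Ys i ∈ y) →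
        X (Y ((List.ofFn fun i => Xs i ∘L Ys i).prod Ω)) =
          Y (X ((List.ofFn fun i => Xs i ∘L Ys i).prod Ω)) :=
  commute_on_words_of_indep_general Ω x y hx1 hy1 hxmul hymul hcomm
end

section
/- Let H be a Hilbert space, x a factor of H (x ∨ x' = B(H)), and Ω a unit vector such that |Ω⟩⟨Ω| = XX' for some X ∈ x and X' ∈ x' (the commutant). Then there exist projections P ∈ x and P' ∈ x' with |Ω⟩⟨Ω| = PP'. -/
/-!
Take `P` and `P'` to be the projections onto `(ker X)ᗮ` and `(ker X')ᗮ`. Each lies in the von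
Neumann algebra of its operator, since the commutant leaves the kernel, and hence its orthogonal
complement, invariant. As `Ω = X* X'* Ω = X'* X* Ω`, the vector `Ω` lies in both ranges. Then
`u = PP'v - ⟪Ω, v⟫ Ω` lies in both ranges and is orthogonal to `Ω`, so `XX'u = 0`; but then
`X'*X'u ∈ ker X` is orthogonal to `u`, which forces `X'u = 0` and finally `u = 0`.
-/

open scoped ComplexInnerProductSpace

open Module.End Submodule InnerProductSpace

namespace ContinuousLinearMap

lemma ker_mem_invtSubmodule_of_commute {R M : Type*} [Semiring R] [AddCommMonoid M]
    [TopologicalSpace M] [Module R M] {T S : M →L[R] M} (h : Commute T S) :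
    T.ker ∈ invtSubmodule S.toLinearMap := by
  intro v hv
  simp only [Submodule.mem_comap, LinearMap.mem_ker, coe_coe] at hv ⊢
  rw [← mul_apply_eq_comp, h.eq, mul_apply_eq_comp, hv, map_zero]

variable {𝕜 E : Type*} [RCLike 𝕜] [NormedAddCommGroup E] [InnerProductSpace 𝕜 E]
  [CompleteSpace E]

lemma orthogonal_ker_mem_invtSubmodule_of_commute_star {T S : E →L[𝕜] E}
    (h : Commute T (star S)) : T.kerᗮ ∈ invtSubmodule S.toLinearMap :=
  orthogonal_mem_invtSubmodule (by simpa [star_eq_adjoint] using ker_mem_invtSubmodule_of_commute h)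

lemma star_apply_mem_orthogonal_ker (T : E →L[𝕜] E) (v : E) : star T v ∈ T.kerᗮ := by
  intro u hu
  rw [LinearMap.mem_ker, coe_coe] at hu
  rw [star_eq_adjoint, adjoint_inner_right, hu, inner_zero_left]

lemma eq_zero_of_mem_orthogonal_ker_of_apply_apply_eq_zero {X Y : E →L[𝕜] E}
    (h : Commute X (star Y)) {u : E} (hX : u ∈ X.kerᗮ) (hY : u ∈ Y.kerᗮ)
    (hXY : X (Y u) = 0) : u = 0 := by
  have hker : star Y (Y u) ∈ X.ker := by
    rw [LinearMap.mem_ker, coe_coe, ← mul_apply_eq_comp, h.eq, mul_apply_eq_comp, hXY, map_zero]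
  have hYu : Y u = 0 := by
    rw [← inner_self_eq_zero (𝕜 := 𝕜), ← adjoint_inner_right, ← star_eq_adjoint]
    exact Submodule.inner_left_of_mem_orthogonal hker hX
  exact inner_self_eq_zero.1 (Submodule.inner_left_of_mem_orthogonal (hYu : u ∈ Y.ker) hY)

theorem starProjection_mul_starProjection_eq_rankOne {X Y : E →L[𝕜] E} {Ω : E} (hΩ : ‖Ω‖ = 1)
    (hXY : X * Y = rankOne 𝕜 Ω Ω) (hcomm : Commute X Y) (hcomm_star : Commute X (star Y))
    (hproj : Commute X.kerᗮ.starProjection Y.kerᗮ.starProjection) :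
    X.kerᗮ.starProjection * Y.kerᗮ.starProjection = rankOne 𝕜 Ω Ω := by
  set P := X.kerᗮ.starProjection
  set Q := Y.kerᗮ.starProjection
  have hF : IsSelfAdjoint (rankOne 𝕜 Ω Ω) := (isStarProjection_rankOne_self hΩ).isSelfAdjoint
  have hΩΩ : ⟪Ω, Ω⟫_𝕜 = 1 := by simp [inner_self_eq_norm_sq_to_K, hΩ]
  have hFΩ : rankOne 𝕜 Ω Ω Ω = Ω := by rw [rankOne_apply, hΩΩ, one_smul]
  have hΩX : Ω ∈ X.kerᗮ := by
    have : star X (star Y Ω) = Ω := by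
      rw [← mul_apply_eq_comp, ← star_mul, ← hcomm.eq, hXY, hF.star_eq, hFΩ]
    exact this ▸ star_apply_mem_orthogonal_ker X _
  have hΩY : Ω ∈ Y.kerᗮ := by
    have : star Y (star X Ω) = Ω := by
      rw [← mul_apply_eq_comp, ← star_mul, hXY, hF.star_eq, hFΩ]
    exact this ▸ star_apply_mem_orthogonal_ker Y _
  have hPΩ : P Ω = Ω := starProjection_eq_self_iff.2 hΩX
  have hQΩ : Q Ω = Ω := starProjection_eq_self_iff.2 hΩY
  ext v
  rw [mul_apply_eq_comp, rankOne_apply, ← sub_eq_zero]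
  have hinner : ⟪Ω, P (Q v)⟫_𝕜 = ⟪Ω, v⟫_𝕜 := by
    calc ⟪Ω, P (Q v)⟫_𝕜 = ⟪P Ω, Q v⟫_𝕜 := (inner_starProjection_left_eq_right _ _ _).symm
      _ = ⟪Q Ω, v⟫_𝕜 := by rw [hPΩ]; exact (inner_starProjection_left_eq_right _ _ _).symm
      _ = ⟪Ω, v⟫_𝕜 := by rw [hQΩ]
  refine eq_zero_of_mem_orthogonal_ker_of_apply_apply_eq_zero hcomm_star ?_ ?_ ?_
  · exact sub_mem (starProjection_apply_mem _ _) (smul_mem _ _ hΩX)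
  · rw [← mul_apply_eq_comp, hproj.eq, mul_apply_eq_comp]
    exact sub_mem (starProjection_apply_mem _ _) (smul_mem _ _ hΩY)
  · rw [← mul_apply_eq_comp, hXY, rankOne_apply, inner_sub_right, inner_smul_right, hinner, hΩΩ,
      mul_one, sub_self, zero_smul]

end ContinuousLinearMap

namespace VonNeumannAlgebra

variable {H : Type*} [NormedAddCommGroup H] [InnerProductSpace ℂ H] [CompleteSpace H]

lemma starProjection_orthogonal_ker_mem {S : VonNeumannAlgebra H} {X : H →L[ℂ] H} (hX : X ∈ S) :
    X.kerᗮ.starProjection ∈ S := by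
  rw [IsStarProjection.mem_iff isStarProjection_starProjection]
  intro T hT
  rw [range_starProjection]
  exact ContinuousLinearMap.orthogonal_ker_mem_invtSubmodule_of_commute_star
    (mem_commutant_iff.1 (star_mem hT) X hX)

end VonNeumannAlgebra

open VonNeumannAlgebra ContinuousLinearMap in
theorem rankOne_proj_eq_proj_mul_proj_of_eq_mul_general {H : Type*} [NormedAddCommGroup H]
    [InnerProductSpace ℂ H] [CompleteSpace H]
    (x : VonNeumannAlgebra H)
    (Ω : H) (hΩ : ‖Ω‖ = 1)
    (X X' : H →L[ℂ] H) (hX : X ∈ x) (hX' : X' ∈ x.commutant)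
    (hXX' : ∀ v : H, X (X' v) = ⟪Ω, v⟫ • Ω) :
    ∃ P ∈ x, ∃ P' ∈ x.commutant,
      IsSelfAdjoint P ∧ P ∘L P = P ∧ IsSelfAdjoint P' ∧ P' ∘L P' = P' ∧
      ∀ v : H, P (P' v) = ⟪Ω, v⟫ • Ω := by
  have hP := starProjection_orthogonal_ker_mem hX
  have hP' := starProjection_orthogonal_ker_mem hX'
  have hPP' := starProjection_mul_starProjection_eq_rankOne hΩ (ext hXX')
    (mem_commutant_iff.1 hX' X hX) (mem_commutant_iff.1 (star_mem hX') X hX)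
    (mem_commutant_iff.1 hP' _ hP)
  exact ⟨_, hP, _, hP', isSelfAdjoint_starProjection _, isIdempotentElem_starProjection _,
    isSelfAdjoint_starProjection _, isIdempotentElem_starProjection _, fun v => congr($hPP' v)⟩

/-- If `x` is a factor (`x ∨ x' = B(H)`) and the rank-one projection onto `ℂΩ` decomposes as
`XX'` with `X ∈ x`, `X' ∈ x'`, then it also decomposes as a product `PP'` of projections
`P ∈ x` and `P' ∈ x'`. -/
theorem rankOne_proj_eq_proj_mul_proj_of_eq_mul {H : Type*} [NormedAddCommGroup H]
    [InnerProductSpace ℂ H] [CompleteSpace H]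
    (x : VonNeumannAlgebra H)
    (hfactor : Set.centralizer (Set.centralizer
      ((x : Set (H →L[ℂ] H)) ∪ (x.commutant : Set (H →L[ℂ] H)))) = Set.univ)
    (Ω : H) (hΩ : ‖Ω‖ = 1)
    (X X' : H →L[ℂ] H) (hX : X ∈ x) (hX' : X' ∈ x.commutant)
    (hXX' : ∀ v : H, X (X' v) = ⟪Ω, v⟫ • Ω) :
    ∃ P ∈ x, ∃ P' ∈ x.commutant,
      IsSelfAdjoint P ∧ P ∘L P = P ∧ IsSelfAdjoint P' ∧ P' ∘L P' = P' ∧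
      ∀ v : H, P (P' v) = ⟪Ω, v⟫ • Ω :=
  rankOne_proj_eq_proj_mul_proj_of_eq_mul_general x Ω hΩ X X' hX hX' hXX'
end

section
/- Let (𝖡, Ω) be a unital factorization on a Hilbert space H and let x, y ∈ 𝖡 with x ∧ y = 0. Then the subspace cl(xΩ) is orthogonal to cl(yΩ) ⊖ ℂΩ. -/
open scoped ComplexInnerProductSpace

/-- A unital factorization on a Hilbert space `H`: a Boolean algebra of factors of `H`
(with meet = intersection, join = generated von Neumann algebra (double centralizer of the
union), complement = commutant) together with a unit vector `unit` under which each member is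
independent of its commutant. -/
structure UnitalFactorization (H : Type*) [NormedAddCommGroup H] [InnerProductSpace ℂ H]
    [CompleteSpace H] where
  mem : Set (VonNeumannAlgebra H)
  unit : H
  norm_unit : ‖unit‖ = 1
  nonempty : mem.Nonempty
  compl_mem : ∀ x ∈ mem, x.commutant ∈ mem
  inf_mem : ∀ x ∈ mem, ∀ y ∈ mem, ∃ z ∈ mem,
    (z : Set (H →L[ℂ] H)) = (x : Set (H →L[ℂ] H)) ∩ (y : Set (H →L[ℂ] H))
  sup_mem : ∀ x ∈ mem, ∀ y ∈ mem, ∃ z ∈ mem,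
    (z : Set (H →L[ℂ] H)) =
      Set.centralizer (Set.centralizer ((x : Set (H →L[ℂ] H)) ∪ (y : Set (H →L[ℂ] H))))
  factor : ∀ x ∈ mem,
    Set.centralizer (Set.centralizer
      ((x : Set (H →L[ℂ] H)) ∪ (x.commutant : Set (H →L[ℂ] H)))) = Set.univ
  distrib : ∀ x ∈ mem, ∀ y ∈ mem, ∀ z ∈ mem,
    (x : Set (H →L[ℂ] H)) ∩
        Set.centralizer (Set.centralizer ((y : Set (H →L[ℂ] H)) ∪ (z : Set (H →L[ℂ] H)))) =
      Set.centralizer (Set.centralizer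
        (((x : Set (H →L[ℂ] H)) ∩ (y : Set (H →L[ℂ] H))) ∪
          ((x : Set (H →L[ℂ] H)) ∩ (z : Set (H →L[ℂ] H)))))
  indep : ∀ x ∈ mem, ∀ X ∈ x, ∀ X' ∈ x.commutant,
    ⟪unit, X (X' unit)⟫ = ⟪unit, X unit⟫ * ⟪unit, X' unit⟫

/-!
Distributivity gives `y = (y ∧ x) ∨ (y ∧ x')`; when `x ∧ y = 0` both terms lie in `x'`, so
`y ≤ x'`. Independence of `x` and `x'` under `Ω` then says `⟪XΩ, YΩ⟫ = ⟪XΩ, Ω⟫⟪Ω, YΩ⟫` for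
`X ∈ x`, `Y ∈ y`, which is the orthogonality on the dense parts; continuity extends it to the
closures.
-/

theorem inner_map_eq_zero_of_mem_closure {𝕜 E : Type*} [RCLike 𝕜] [SeminormedAddCommGroup E]
    [InnerProductSpace 𝕜 E] {f : E → E} (hf : Continuous f) {s t : Set E}
    (h : ∀ u ∈ s, ∀ v ∈ t, inner 𝕜 u (f v) = 0) :
    ∀ u ∈ closure s, ∀ v ∈ closure t, inner 𝕜 u (f v) = 0 := by
  intro u hu v hv
  have huv : (u, v) ∈ closure (s ×ˢ t) := by
    rw [closure_prod_eq]
    exact ⟨hu, hv⟩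
  exact closure_minimal (fun p hp => h _ hp.1 _ hp.2)
    (isClosed_eq (continuous_fst.inner (hf.comp continuous_snd)) continuous_const) huv

namespace UnitalFactorization

variable {H : Type*} [NormedAddCommGroup H] [InnerProductSpace ℂ H] [CompleteSpace H]
  (F : UnitalFactorization H) {x y : VonNeumannAlgebra H}

theorem le_commutant_of_inter_eq_scalars (hx : x ∈ F.mem) (hy : y ∈ F.mem)
    (hmeet : (x : Set (H →L[ℂ] H)) ∩ (y : Set (H →L[ℂ] H)) =
      Set.range fun c : ℂ => c • (1 : H →L[ℂ] H)) :
    y ≤ x.commutant := by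
  have hunion : ((y : Set (H →L[ℂ] H)) ∩ x) ∪ ((y : Set (H →L[ℂ] H)) ∩ x.commutant) ⊆
      x.commutant := by
    rintro T (hT | hT)
    · rw [Set.inter_comm, hmeet] at hT
      obtain ⟨c, rfl⟩ := hT
      exact x.commutant.toStarSubalgebra.smul_mem (one_mem _) c
    · exact hT.2
  have hy_eq := F.distrib y hy x hx x.commutant (F.compl_mem x hx)
  rw [F.factor x hx, Set.inter_univ] at hy_eq
  intro Y hY
  rw [← SetLike.mem_coe, ← x.commutant.centralizer_centralizer]
  exact Set.centralizer_subset (Set.centralizer_subset hunion) (hy_eq ▸ hY)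

theorem inner_apply_unit_apply_unit (hx : x ∈ F.mem) {X Y : H →L[ℂ] H} (hX : X ∈ x)
    (hY : Y ∈ x.commutant) :
    ⟪X F.unit, Y F.unit⟫ = ⟪X F.unit, F.unit⟫ * ⟪F.unit, Y F.unit⟫ := by
  have hX_adj : X.adjoint ∈ x := by
    rw [← ContinuousLinearMap.star_eq_adjoint]
    exact star_mem hX
  simp only [← ContinuousLinearMap.adjoint_inner_right X]
  exact F.indep x hx _ hX_adj Y hY

theorem inner_apply_unit_sub_eq_zero (hx : x ∈ F.mem) {X Y : H →L[ℂ] H} (hX : X ∈ x)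
    (hY : Y ∈ x.commutant) :
    ⟪X F.unit, Y F.unit - ⟪F.unit, Y F.unit⟫ • F.unit⟫ = 0 := by
  rw [inner_sub_right, inner_smul_right, F.inner_apply_unit_apply_unit hx hX hY, mul_comm,
    sub_self]

end UnitalFactorization

/-- In a unital factorization `(𝖡, Ω)`, if `x, y ∈ 𝖡` have `x ∧ y = 0` (their intersection
consists of the scalar multiples of the identity), then `cl(xΩ)` is orthogonal to
`cl(yΩ) ⊖ ℂΩ`. -/
theorem orthogonal_of_meet_eq_bot {H : Type*} [NormedAddCommGroup H] [InnerProductSpace ℂ H]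
    [CompleteSpace H] (F : UnitalFactorization H) (x y : VonNeumannAlgebra H)
    (hx : x ∈ F.mem) (hy : y ∈ F.mem)
    (hmeet : (x : Set (H →L[ℂ] H)) ∩ (y : Set (H →L[ℂ] H)) =
      Set.range fun c : ℂ => c • (1 : H →L[ℂ] H)) :
    ∀ ξ ∈ closure {w : H | ∃ X ∈ x, w = X F.unit},
      ∀ ξ' ∈ closure {w : H | ∃ Y ∈ y, w = Y F.unit},
        ⟪ξ, ξ' - ⟪F.unit, ξ'⟫ • F.unit⟫ = 0 := by
  have hy_le := F.le_commutant_of_inter_eq_scalars hx hy hmeet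
  refine inner_map_eq_zero_of_mem_closure (f := fun w => w - ⟪F.unit, w⟫ • F.unit)
    (by fun_prop) ?_
  rintro _ ⟨X, hX, rfl⟩ _ ⟨Y, hY, rfl⟩
  exact F.inner_apply_unit_sub_eq_zero hx hX (hy_le hY)
end

section
/- Let 𝖡 be a factorization of a separable Hilbert space H. If for every monotone increasing sequence (x_n) in 𝖡 the join ∨_n x_n lies in 𝖡, then 𝖡 is closed under arbitrary joins. (Key step: 𝖡 satisfies the countable chain condition — there is no uncountable antichain of pairwise-disjoint nonzero elements.) -/
/-!
Write `Ω` for the unit vector and `ℂ` for the trivial algebra. If `x ∧ y = ℂ`, distributivity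
gives `y ⊆ x′`, and independence then makes the centred vectors `XΩ - ⟪Ω, XΩ⟫Ω` of `x` orthogonal
to those of `y`. A factor `x ≠ ℂ` has some `X` without `Ω` as eigenvector: otherwise the projection
onto the closure of `x′Ω` commutes with `x` and `x′`, hence is central and equal to `1`, and `x′Ω`
is dense, which forces `x = ℂ`. So a family of pairwise disjoint nontrivial members yields pairwise
orthogonal nonzero vectors and is countable by separability.

Finite joins exist, so countable joins are joins of monotone sequences. For an arbitrary `X`, a
maximal disjoint family `M` below `⋁ X` is countable, with join `z`; for `x ∈ X` the element
`x ∧ z′` is disjoint from all of `M`, hence trivial by maximality, so `x ≤ z`.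
-/

open scoped ComplexInnerProductSpace

namespace Set

variable {M : Type*} [Mul M]

lemma centralizer_iUnion {ι : Sort*} (s : ι → Set M) :
    centralizer (⋃ i, s i) = ⋂ i, centralizer (s i) := by
  ext c
  simp only [mem_centralizer_iff, mem_iUnion, mem_iInter, forall_exists_index]
  exact forall_comm

lemma centralizer_iUnion_centralizer_centralizer {ι : Sort*} (s : ι → Set M) :
    centralizer (⋃ i, centralizer (centralizer (s i))) = centralizer (⋃ i, s i) := by
  simp only [centralizer_iUnion, centralizer_centralizer_centralizer]

lemma centralizer_union_centralizer_centralizer (s t : Set M) :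
    centralizer (s ∪ centralizer (centralizer t)) = centralizer (s ∪ t) := by
  simp only [centralizer_union, centralizer_centralizer_centralizer]

end Set

section InnerProductSpace

variable {H : Type*} [NormedAddCommGroup H] [InnerProductSpace ℂ H]

variable (H) in
abbrev scalarOperators : Set (H →L[ℂ] H) := Set.range fun c : ℂ => c • (1 : H →L[ℂ] H)

lemma scalarOperators_subset_centralizer (s : Set (H →L[ℂ] H)) :
    scalarOperators H ⊆ s.centralizer := by
  rintro - ⟨c, rfl⟩ T -
  simp only [mul_smul_comm, smul_mul_assoc, mul_one, one_mul]

lemma centralizer_univ_eq_scalarOperators :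
    (Set.univ : Set (H →L[ℂ] H)).centralizer = scalarOperators H := by
  refine (scalarOperators_subset_centralizer _).antisymm' fun T hT => ?_
  rcases subsingleton_or_nontrivial H with _ | _
  · exact ⟨0, Subsingleton.elim _ _⟩
  obtain ⟨v, hv⟩ := exists_norm_eq H zero_le_one
  refine ⟨⟪v, T v⟫, ContinuousLinearMap.ext fun u => ?_⟩
  -- `T` commutes with the rank-one operator `x ↦ ⟪v, x⟫ • u`.
  have key := congr($(hT ((innerSL ℂ v).smulRight u) trivial) v)
  simpa [inner_self_eq_norm_sq_to_K, hv] using key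

lemma centralizer_eq_scalarOperators_of_centralizer_centralizer_eq_univ
    {s : Set (H →L[ℂ] H)} (h : s.centralizer.centralizer = Set.univ) :
    s.centralizer = scalarOperators H := by
  rw [← Set.centralizer_centralizer_centralizer, h, centralizer_univ_eq_scalarOperators]

lemma inner_sub_smul_eq_zero_of_inner_eq_mul {Ω u w : H} (hΩ : ‖Ω‖ = 1)
    (h : ⟪u, w⟫ = ⟪u, Ω⟫ * ⟪Ω, w⟫) :
    ⟪u - ⟪Ω, u⟫ • Ω, w - ⟪Ω, w⟫ • Ω⟫ = 0 := by
  have hΩΩ : ⟪Ω, Ω⟫ = 1 := by simp [inner_self_eq_norm_sq_to_K, hΩ]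
  simp only [inner_sub_left, inner_sub_right, inner_smul_left, inner_smul_right, inner_conj_symm,
    h, hΩΩ]
  ring

lemma Submodule.eq_top_of_starProjection_mem_scalarOperators [CompleteSpace H]
    {K : Submodule ℂ H} [K.HasOrthogonalProjection] {x : H} (hxK : x ∈ K) (hx : x ≠ 0)
    (h : K.starProjection ∈ scalarOperators H) : K = ⊤ := by
  obtain ⟨c, hc⟩ := h
  have hcx : c • x = x := by simpa [← hc] using Submodule.starProjection_eq_self_iff.2 hxK
  have hc1 : c = 1 := by
    have : (c - 1) • x = 0 := by rw [sub_smul, one_smul, hcx, sub_self]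
    exact sub_eq_zero.1 ((smul_eq_zero.1 this).resolve_right hx)
  exact eq_top_iff'.2 fun y => Submodule.starProjection_eq_self_iff.1 (by simp [← hc, hc1])

end InnerProductSpace

lemma countable_of_pairwise_inner_eq_zero {𝕜 E ι : Type*} [RCLike 𝕜] [NormedAddCommGroup E]
    [InnerProductSpace 𝕜 E] [TopologicalSpace.SeparableSpace E] {v : ι → E} (hv : ∀ i, v i ≠ 0)
    (horth : Pairwise fun i j => inner 𝕜 (v i) (v j) = 0) : Countable ι := by
  refine Pairwise.countable_of_isOpen_disjoint (s := fun i => Metric.ball (v i) (‖v i‖ / 2))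
    (fun i j hij => Metric.ball_disjoint_ball ?_) (fun _ => Metric.isOpen_ball)
    (fun i => Metric.nonempty_ball.2 (half_pos (norm_pos_iff.2 (hv i))))
  have hsq : ‖v i - v j‖ ^ 2 = ‖v i‖ ^ 2 + ‖v j‖ ^ 2 := by
    rw [@norm_sub_sq 𝕜, horth hij]; simp
  rw [dist_eq_norm, ← pow_le_pow_iff_left₀ (by positivity) (norm_nonneg _) two_ne_zero, hsq]
  nlinarith [sq_nonneg (‖v i‖ - ‖v j‖)]

namespace VonNeumannAlgebra

variable {H : Type*} [NormedAddCommGroup H] [InnerProductSpace ℂ H] [CompleteSpace H]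
  (a : VonNeumannAlgebra H)

lemma scalarOperators_subset : scalarOperators H ⊆ a := by
  rintro - ⟨c, rfl⟩
  exact a.toStarSubalgebra.smul_mem (one_mem _) c

lemma centralizer_centralizer_subset {s : Set (H →L[ℂ] H)} (h : s ⊆ a) :
    s.centralizer.centralizer ⊆ a :=
  a.centralizer_centralizer ▸ Set.centralizer_subset (Set.centralizer_subset h)

lemma inter_commutant_eq_scalarOperators
    (h : Set.centralizer (Set.centralizer ((a : Set (H →L[ℂ] H)) ∪ a.commutant)) = Set.univ) :
    (a : Set (H →L[ℂ] H)) ∩ a.commutant = scalarOperators H := by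
  rw [← centralizer_eq_scalarOperators_of_centralizer_centralizer_eq_univ h, Set.centralizer_union,
    coe_commutant, a.centralizer_centralizer, Set.inter_comm]

lemma starProjection_mem {K : Submodule ℂ H} [K.HasOrthogonalProjection]
    (hK : ∀ T ∈ a.commutant, K ∈ Module.End.invtSubmodule (T : H →ₗ[ℂ] H)) :
    K.starProjection ∈ a := by
  rw [IsStarProjection.mem_iff isStarProjection_starProjection]
  simpa using hK

variable {a}

lemma dense_span_commutant_orbit
    (hcenter : (a : Set (H →L[ℂ] H)) ∩ a.commutant = scalarOperators H) {Ω : H} (hΩ : Ω ≠ 0)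
    (h : ∀ X ∈ a, X Ω ∈ ℂ ∙ Ω) :
    Dense (Submodule.span ℂ ((· Ω) '' (a.commutant : Set (H →L[ℂ] H))) : Set H) := by
  set N := Submodule.span ℂ ((· Ω) '' (a.commutant : Set (H →L[ℂ] H)))
  have hinv : ∀ T ∈ (a : Set (H →L[ℂ] H)) ∪ a.commutant,
      N.topologicalClosure ∈ Module.End.invtSubmodule (T : H →ₗ[ℂ] H) := by
    intro T hT
    refine Submodule.topologicalClosure_mem_invtSubmodule ?_
    rw [Module.End.mem_invtSubmodule, Submodule.span_le]
    rintro - ⟨Y, hY, rfl⟩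
    rcases hT with hTa | hTa'
    · obtain ⟨c, hc⟩ := Submodule.mem_span_singleton.1 (h T hTa)
      have hTY : T (Y Ω) = c • Y Ω := by
        rw [← map_smul, hc]
        exact congr($(mem_commutant_iff.1 hY T hTa) Ω)
      simpa [hTY] using N.smul_mem c (Submodule.subset_span ⟨Y, hY, rfl⟩)
    · exact Submodule.subset_span ⟨T * Y, mul_mem hTa' hY, rfl⟩
  have hP : N.topologicalClosure.starProjection ∈ (a : Set (H →L[ℂ] H)) ∩ a.commutant :=
    ⟨a.starProjection_mem fun T hT => hinv T (Or.inr hT),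
      a.commutant.starProjection_mem fun T hT => hinv T (Or.inl (a.commutant_commutant ▸ hT))⟩
  rw [hcenter] at hP
  exact Submodule.dense_iff_topologicalClosure_eq_top.2
    (Submodule.eq_top_of_starProjection_mem_scalarOperators
      (N.le_topologicalClosure (Submodule.subset_span ⟨1, one_mem _, rfl⟩)) hΩ hP)

lemma eq_scalarOperators_of_forall_apply_mem_span_singleton
    (hcenter : (a : Set (H →L[ℂ] H)) ∩ a.commutant = scalarOperators H) {Ω : H} (hΩ : Ω ≠ 0)
    (h : ∀ X ∈ a, X Ω ∈ ℂ ∙ Ω) :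
    (a : Set (H →L[ℂ] H)) = scalarOperators H := by
  refine subset_antisymm (fun X hX => ?_) a.scalarOperators_subset
  obtain ⟨c, hc⟩ := Submodule.mem_span_singleton.1 (h X hX)
  suffices X - c • 1 = 0 from ⟨c, (sub_eq_zero.1 this).symm⟩
  refine ContinuousLinearMap.ext_on (dense_span_commutant_orbit hcenter hΩ h) ?_
  rintro - ⟨Y, hY, rfl⟩
  have hXY : X (Y Ω) = Y (X Ω) := congr($(mem_commutant_iff.1 hY X hX) Ω)
  simp [hXY, ← hc]

end VonNeumannAlgebra

namespace UnitalFactorization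

open Set

variable {H : Type*} [NormedAddCommGroup H] [InnerProductSpace ℂ H] [CompleteSpace H]
  (F : UnitalFactorization H)

lemma inter_commutant_eq {a : VonNeumannAlgebra H} (ha : a ∈ F.mem) :
    (a : Set (H →L[ℂ] H)) ∩ a.commutant = scalarOperators H :=
  a.inter_commutant_eq_scalarOperators (F.factor a ha)

lemma subset_commutant_of_inter_eq {a b : VonNeumannAlgebra H} (ha : a ∈ F.mem) (hb : b ∈ F.mem)
    (hab : (a : Set (H →L[ℂ] H)) ∩ b = scalarOperators H) :
    (b : Set (H →L[ℂ] H)) ⊆ a.commutant := by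
  have hd := F.distrib b hb a ha a.commutant (F.compl_mem a ha)
  rw [F.factor a ha, inter_univ, inter_comm (b : Set (H →L[ℂ] H)), hab,
    union_eq_self_of_subset_left
      (subset_inter b.scalarOperators_subset a.commutant.scalarOperators_subset)] at hd
  exact hd.trans_subset (a.commutant.centralizer_centralizer_subset inter_subset_right)

lemma exists_apply_unit_notMem_span {a : VonNeumannAlgebra H} (ha : a ∈ F.mem)
    (hne : (a : Set (H →L[ℂ] H)) ≠ scalarOperators H) : ∃ X ∈ a, X F.unit ∉ ℂ ∙ F.unit := by
  by_contra! h
  exact hne (VonNeumannAlgebra.eq_scalarOperators_of_forall_apply_mem_span_singleton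
    (F.inter_commutant_eq ha) (norm_ne_zero_iff.1 (F.norm_unit ▸ one_ne_zero)) h)

lemma inner_centered_eq_zero {a : VonNeumannAlgebra H} (ha : a ∈ F.mem) {X Y : H →L[ℂ] H}
    (hX : X ∈ a) (hY : Y ∈ a.commutant) :
    ⟪X F.unit - ⟪F.unit, X F.unit⟫ • F.unit, Y F.unit - ⟪F.unit, Y F.unit⟫ • F.unit⟫ = 0 := by
  refine inner_sub_smul_eq_zero_of_inner_eq_mul F.norm_unit ?_
  have := F.indep a ha _ (star_mem hX) Y hY
  rwa [ContinuousLinearMap.star_eq_adjoint, ContinuousLinearMap.adjoint_inner_right,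
    ContinuousLinearMap.adjoint_inner_right] at this

def IsDisjointFamily (A : Set (VonNeumannAlgebra H)) : Prop :=
  A ⊆ F.mem ∧ (∀ a ∈ A, (a : Set (H →L[ℂ] H)) ≠ scalarOperators H) ∧
    A.Pairwise fun a b => (a : Set (H →L[ℂ] H)) ∩ b = scalarOperators H

variable {F} in
lemma IsDisjointFamily.countable [TopologicalSpace.SeparableSpace H]
    {A : Set (VonNeumannAlgebra H)} (hA : F.IsDisjointFamily A) : A.Countable := by
  obtain ⟨hAF, hA0, hAd⟩ := hA
  choose X hXa hX using fun a : A => F.exists_apply_unit_notMem_span (hAF a.2) (hA0 a a.2)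
  refine countable_coe_iff.1 (countable_of_pairwise_inner_eq_zero (𝕜 := ℂ)
    (v := fun a => X a F.unit - ⟪F.unit, X a F.unit⟫ • F.unit) (fun a h => hX a ?_)
    fun a b hab => ?_)
  · rw [sub_eq_zero.1 h]
    exact Submodule.smul_mem _ _ (Submodule.mem_span_singleton_self _)
  · exact F.inner_centered_eq_zero (hAF a.2) (hXa a) (F.subset_commutant_of_inter_eq (hAF a.2)
      (hAF b.2) (hAd a.2 b.2 (Subtype.coe_ne_coe.2 hab)) (hXa b))

def HasJoin (X : Set (VonNeumannAlgebra H)) : Prop :=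
  ∃ z ∈ F.mem, (z : Set (H →L[ℂ] H)) =
    Set.centralizer (Set.centralizer (⋃ x ∈ X, (x : Set (H →L[ℂ] H))))

lemma hasJoin_empty : F.HasJoin ∅ := by
  obtain ⟨x, hx⟩ := F.nonempty
  obtain ⟨z, hz, hzx⟩ := F.inf_mem x hx _ (F.compl_mem x hx)
  refine ⟨z, hz, ?_⟩
  rw [hzx, F.inter_commutant_eq hx, biUnion_empty, centralizer_empty, top_eq_univ,
    centralizer_univ_eq_scalarOperators]

lemma hasJoin_insert {x : VonNeumannAlgebra H} {X : Set (VonNeumannAlgebra H)} (hx : x ∈ F.mem)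
    (hX : F.HasJoin X) : F.HasJoin (insert x X) := by
  obtain ⟨y, hy, hyX⟩ := hX
  obtain ⟨z, hz, hzxy⟩ := F.sup_mem x hx y hy
  refine ⟨z, hz, ?_⟩
  rw [hzxy, hyX, centralizer_union_centralizer_centralizer, biUnion_insert]

lemma hasJoin_of_finite {X : Set (VonNeumannAlgebra H)} (hX : X ⊆ F.mem) (hfin : X.Finite) :
    F.HasJoin X := by
  induction X, hfin using Set.Finite.induction_on with
  | empty => exact F.hasJoin_empty
  | insert _ _ ih =>
    exact F.hasJoin_insert (hX (mem_insert _ _)) (ih ((subset_insert _ _).trans hX))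

lemma hasJoin_of_countable
    (hseq : ∀ x : ℕ → VonNeumannAlgebra H, (∀ n, x n ∈ F.mem) →
      (Monotone fun n => ((x n : Set (H →L[ℂ] H)))) →
      ∃ z ∈ F.mem, (z : Set (H →L[ℂ] H)) =
        Set.centralizer (Set.centralizer (⋃ n, ((x n : Set (H →L[ℂ] H))))))
    {X : Set (VonNeumannAlgebra H)} (hX : X ⊆ F.mem) (hc : X.Countable) : F.HasJoin X := by
  rcases X.eq_empty_or_nonempty with rfl | hne
  · exact F.hasJoin_empty
  obtain ⟨f, rfl⟩ := hc.exists_eq_range hne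
  choose y hy hyf using fun n =>
    F.hasJoin_of_finite ((image_subset_range f (Iic n)).trans hX) ((finite_Iic n).image f)
  have hmono : Monotone fun n => (y n : Set (H →L[ℂ] H)) := fun m n hmn => by
    simp only [hyf]
    exact centralizer_subset (centralizer_subset
      (biUnion_subset_biUnion_left (image_mono (Iic_subset_Iic.2 hmn))))
  obtain ⟨z, hz, hzy⟩ := hseq y hy hmono
  refine ⟨z, hz, ?_⟩
  rw [hzy]
  simp only [hyf, centralizer_iUnion_centralizer_centralizer]
  congr 2
  ext T
  simp only [mem_iUnion, biUnion_image, biUnion_range, mem_Iic]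
  exact ⟨fun ⟨_, j, _, hj⟩ => ⟨j, hj⟩, fun ⟨j, hj⟩ => ⟨j, j, le_rfl, hj⟩⟩

lemma exists_maximal_isDisjointFamily (U : Set (H →L[ℂ] H)) :
    ∃ M, Maximal (fun A => F.IsDisjointFamily A ∧ ∀ a ∈ A, (a : Set (H →L[ℂ] H)) ⊆ U) M := by
  refine zorn_subset _ fun C hC hchain =>
    ⟨⋃₀ C, ⟨⟨?_, ?_, ?_⟩, ?_⟩, fun _ => subset_sUnion_of_mem⟩
  · exact sUnion_subset fun A hA => (hC hA).1.1
  · rintro a ⟨A, hA, ha⟩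
    exact (hC hA).1.2.1 a ha
  · exact (pairwise_sUnion hchain.directedOn).2 fun A hA => (hC hA).1.2.2
  · rintro a ⟨A, hA, ha⟩
    exact (hC hA).2 a ha

lemma subset_of_maximal_isDisjointFamily {U : Set (H →L[ℂ] H)} {M : Set (VonNeumannAlgebra H)}
    (hM : Maximal (fun A => F.IsDisjointFamily A ∧ ∀ a ∈ A, (a : Set (H →L[ℂ] H)) ⊆ U) M)
    {z : VonNeumannAlgebra H} (hz : z ∈ F.mem) (hMz : ∀ a ∈ M, (a : Set (H →L[ℂ] H)) ⊆ z)
    {x : VonNeumannAlgebra H} (hx : x ∈ F.mem) (hxU : (x : Set (H →L[ℂ] H)) ⊆ U) :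
    (x : Set (H →L[ℂ] H)) ⊆ z := by
  obtain ⟨⟨hMF, hM0, hMd⟩, hMU⟩ := hM.1
  obtain ⟨b, hb, hbxz⟩ := F.inf_mem x hx z.commutant (F.compl_mem z hz)
  have hbz' : (b : Set (H →L[ℂ] H)) ⊆ z.commutant := hbxz ▸ inter_subset_right
  have hMb : ∀ a ∈ M, (a : Set (H →L[ℂ] H)) ∩ b = scalarOperators H := fun a ha =>
    subset_antisymm ((inter_subset_inter (hMz a ha) hbz').trans (F.inter_commutant_eq hz).subset)
      (subset_inter a.scalarOperators_subset b.scalarOperators_subset)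
  have hb0 : (b : Set (H →L[ℂ] H)) = scalarOperators H := by
    by_contra hb0
    have hbM : b ∉ M := fun hbM => hb0 (by simpa using hMb b hbM)
    have hins : F.IsDisjointFamily (insert b M) ∧
        ∀ a ∈ insert b M, (a : Set (H →L[ℂ] H)) ⊆ U := by
      refine ⟨⟨insert_subset hb hMF, forall_mem_insert.2 ⟨hb0, hM0⟩,
        hMd.insert fun a ha _ => ⟨inter_comm (a : Set (H →L[ℂ] H)) b ▸ hMb a ha, hMb a ha⟩⟩,
        forall_mem_insert.2 ⟨hbxz ▸ inter_subset_left.trans hxU, hMU⟩⟩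
    exact hbM (hM.2 hins (subset_insert b M) (mem_insert b M))
  have hxz' := F.subset_commutant_of_inter_eq (F.compl_mem z hz) hx
    (by rw [inter_comm, ← hbxz, hb0])
  rwa [z.commutant_commutant] at hxz'

end UnitalFactorization

/-- If a unital factorization of a separable Hilbert space is closed under joins of monotone
sequences, then it satisfies the countable chain condition and is closed under arbitrary
joins. -/
theorem complete_of_sequentially_complete {H : Type*} [NormedAddCommGroup H]
    [InnerProductSpace ℂ H] [CompleteSpace H] [TopologicalSpace.SeparableSpace H]
    (F : UnitalFactorization H)
    (hseq : ∀ x : ℕ → VonNeumannAlgebra H, (∀ n, x n ∈ F.mem) →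
      (Monotone fun n => ((x n : Set (H →L[ℂ] H)))) →
      ∃ z ∈ F.mem, (z : Set (H →L[ℂ] H)) =
        Set.centralizer (Set.centralizer (⋃ n, ((x n : Set (H →L[ℂ] H)))))) :
    (∀ A : Set (VonNeumannAlgebra H), A ⊆ F.mem →
      (∀ a ∈ A, (a : Set (H →L[ℂ] H)) ≠ Set.range fun c : ℂ => c • (1 : H →L[ℂ] H)) →
      (∀ a ∈ A, ∀ b ∈ A, a ≠ b → (a : Set (H →L[ℂ] H)) ∩ (b : Set (H →L[ℂ] H)) =
        Set.range fun c : ℂ => c • (1 : H →L[ℂ] H)) →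
      A.Countable) ∧
    ∀ X : Set (VonNeumannAlgebra H), X ⊆ F.mem →
      ∃ z ∈ F.mem, (z : Set (H →L[ℂ] H)) =
        Set.centralizer (Set.centralizer (⋃ x ∈ X, ((x : Set (H →L[ℂ] H))))) := by
  refine ⟨fun A hAF hA0 hAd => UnitalFactorization.IsDisjointFamily.countable ⟨hAF, hA0, hAd⟩,
    fun X hX => ?_⟩
  set U := Set.centralizer (Set.centralizer (⋃ x ∈ X, (x : Set (H →L[ℂ] H))))
  obtain ⟨M, hM⟩ := F.exists_maximal_isDisjointFamily U
  obtain ⟨hMdisj, hMU⟩ := hM.1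
  obtain ⟨z, hz, hzM⟩ := F.hasJoin_of_countable hseq hMdisj.1 hMdisj.countable
  have hMz : ∀ a ∈ M, (a : Set (H →L[ℂ] H)) ⊆ z := fun a ha =>
    hzM ▸ (Set.subset_biUnion_of_mem ha).trans Set.subset_centralizer_centralizer
  have hXz : ⋃ x ∈ X, (x : Set (H →L[ℂ] H)) ⊆ z := Set.iUnion₂_subset fun x hx =>
    F.subset_of_maximal_isDisjointFamily hM hz hMz (hX hx)
      ((Set.subset_biUnion_of_mem hx).trans Set.subset_centralizer_centralizer)
  refine ⟨z, hz, subset_antisymm ?_ (z.centralizer_centralizer_subset hXz)⟩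
  rw [hzM]
  exact (Set.centralizer_subset (Set.centralizer_subset (Set.iUnion₂_subset hMU))).trans
    (Set.centralizer_centralizer_centralizer _).subset
end

section
/- Let g : ℕ → ℂ be absolutely summable with ∑_n |1 − a_n| < ∞ where a_n ∈ ℂ, and suppose 0 < ∏_n |a_n| (the infinite product of the |a_n| converges to a nonzero limit). Let (v_F)_{F finite ⊆ ℕ} be a net in a Hilbert space with ‖v_F − v_G‖² = (∏_{f∈F} c_f)·((−1 + ∏_{f∈G∖F} c_f) + 2Re(1 − ∏_{f∈G∖F} a_f)) for F ⊆ G, where c_f = ‖χ_f‖² ≤ 1 and a_f = ⟨ζ_f, χ_f⟩ with ∑_f(1 − c_f) < ∞ and ∑_f |1 − a_f| < ∞. Then (v_F) is Cauchy along the net of finite subsets ordered by inclusion, hence converges. -/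
/-!
The term `∏_{F} c_f · (−1 + ∏_{G∖F} c_f)` is never positive, because all `c_f ≤ 1`, so
`‖v_F − v_G‖² ≤ 2 ‖1 − ∏_{G∖F} a_f‖ ≤ 2 ∑_{G∖F} |1 − a_f|`, and the right-hand side is small
once `F` contains a large enough finite set, by summability of `|1 − a_f|`.
-/

open Filter
open scoped ComplexInnerProductSpace

theorem Finset.norm_one_sub_prod_le_sum {ι R : Type*} [SeminormedCommRing R] (s : Finset ι)
    {a : ι → R} (ha : ∀ i ∈ s, ‖a i‖ ≤ 1) :
    ‖1 - ∏ i ∈ s, a i‖ ≤ ∑ i ∈ s, ‖1 - a i‖ := by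
  induction s using Finset.cons_induction with
  | empty => simp
  | cons i s _ ih =>
    rw [Finset.prod_cons, Finset.sum_cons]
    have ha' : ∀ j ∈ s, ‖a j‖ ≤ 1 := fun j hj => ha j (Finset.mem_cons_of_mem hj)
    calc ‖1 - a i * ∏ j ∈ s, a j‖
        = ‖(1 - a i) + a i * (1 - ∏ j ∈ s, a j)‖ := by ring_nf
      _ ≤ ‖1 - a i‖ + ‖a i‖ * ‖1 - ∏ j ∈ s, a j‖ := norm_add_le_of_le le_rfl (norm_mul_le _ _)
      _ ≤ ‖1 - a i‖ + 1 * ∑ j ∈ s, ‖1 - a j‖ := by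
        gcongr
        exacts [ha i (Finset.mem_cons_self i s), ih ha']
      _ = ‖1 - a i‖ + ∑ j ∈ s, ‖1 - a j‖ := by rw [one_mul]

theorem cauchySeq_finset_of_dist_sq_le_sum_sdiff {ι E : Type*} [DecidableEq ι]
    [PseudoMetricSpace E] {v : Finset ι → E} {b : ι → ℝ} (hb : Summable b)
    (hv : ∀ F G : Finset ι, F ⊆ G → dist (v F) (v G) ^ 2 ≤ ∑ i ∈ G \ F, b i) :
    CauchySeq v := by
  refine Metric.cauchySeq_iff'.2 fun ε hε => ?_
  obtain ⟨s, hs⟩ := hb.vanishing (Metric.ball_mem_nhds 0 (pow_pos hε 2))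
  refine ⟨s, fun G hG => ?_⟩
  have htail : ∑ i ∈ G \ s, b i < ε ^ 2 :=
    (le_abs_self _).trans_lt (by simpa using hs (G \ s) Finset.sdiff_disjoint)
  rw [dist_comm]
  exact lt_of_pow_lt_pow_left₀ 2 hε.le ((hv s G hG).trans_lt htail)

theorem mul_neg_one_add_add_two_mul_re_le {p q : ℝ} (hp₀ : 0 ≤ p) (hp₁ : p ≤ 1) (hq : q ≤ 1)
    (z : ℂ) : p * ((-1 + q) + 2 * z.re) ≤ 2 * ‖z‖ := by
  nlinarith [Complex.re_le_norm z, norm_nonneg z]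

theorem tensor_net_converges_general {H : Type*} [NormedAddCommGroup H] [InnerProductSpace ℂ H]
    [CompleteSpace H]
    (ζ χ : ℕ → H) (hζ : ∀ f, ‖ζ f‖ = 1) (hχ : ∀ f, ‖χ f‖ ≤ 1)
    (hsuma : Summable fun f => ‖1 - ⟪ζ f, χ f⟫‖)
    (v : Finset ℕ → H)
    (hv : ∀ F G : Finset ℕ, F ⊆ G →
      ‖v F - v G‖ ^ 2 =
        (∏ f ∈ F, ‖χ f‖ ^ 2) *
          ((-1 + ∏ f ∈ G \ F, ‖χ f‖ ^ 2) +
            2 * (1 - ∏ f ∈ G \ F, ⟪ζ f, χ f⟫).re)) :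
    ∃ w : H, Tendsto v atTop (nhds w) := by
  have hc : ∀ f, ‖χ f‖ ^ 2 ≤ 1 := fun f => pow_le_one₀ (norm_nonneg _) (hχ f)
  have ha : ∀ f, ‖⟪ζ f, χ f⟫‖ ≤ 1 := fun f =>
    (norm_inner_le_norm _ _).trans (by rw [hζ, one_mul]; exact hχ f)
  refine cauchySeq_tendsto_of_complete
    (cauchySeq_finset_of_dist_sq_le_sum_sdiff (hsuma.mul_left 2) fun F G hFG => ?_)
  rw [dist_eq_norm, hv F G hFG, ← Finset.mul_sum]
  calc _ ≤ 2 * ‖1 - ∏ f ∈ G \ F, ⟪ζ f, χ f⟫‖ :=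
        mul_neg_one_add_add_two_mul_re_le (Finset.prod_nonneg fun f _ => by positivity)
          (Finset.prod_le_one (fun f _ => by positivity) fun f _ => hc f)
          (Finset.prod_le_one (fun f _ => by positivity) fun f _ => hc f) _
    _ ≤ 2 * ∑ f ∈ G \ F, ‖1 - ⟪ζ f, χ f⟫‖ := by
        gcongr
        exact Finset.norm_one_sub_prod_le_sum _ fun f _ => ha f

/-- Convergence of the net defining an infinite tensor product of vectors: given unit vectors
`ζ_f` and vectors `χ_f` with `‖χ_f‖ ≤ 1`, `∑_f (1 − ‖χ_f‖²) < ∞`, `∑_f |1 − ⟪ζ_f, χ_f⟫| < ∞`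
and `∏_f |⟪ζ_f, χ_f⟫| > 0`, any net `(v_F)` over finite subsets of `ℕ` whose increments
satisfy the displayed identity is Cauchy, hence convergent. -/
theorem tensor_net_converges {H : Type*} [NormedAddCommGroup H] [InnerProductSpace ℂ H]
    [CompleteSpace H]
    (ζ χ : ℕ → H) (hζ : ∀ f, ‖ζ f‖ = 1) (hχ : ∀ f, ‖χ f‖ ≤ 1)
    (hsumc : Summable fun f => 1 - ‖χ f‖ ^ 2)
    (hsuma : Summable fun f => ‖1 - ⟪ζ f, χ f⟫‖)
    (hprod : 0 < ∏' f : ℕ, ‖⟪ζ f, χ f⟫‖)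
    (v : Finset ℕ → H)
    (hv : ∀ F G : Finset ℕ, F ⊆ G →
      ‖v F - v G‖ ^ 2 =
        (∏ f ∈ F, ‖χ f‖ ^ 2) *
          ((-1 + ∏ f ∈ G \ F, ‖χ f‖ ^ 2) +
            2 * (1 - ∏ f ∈ G \ F, ⟪ζ f, χ f⟫).re)) :
    ∃ w : H, Tendsto v atTop (nhds w) :=
  tensor_net_converges_general ζ χ hζ hχ hsuma v hv
end

section
/- Let μ be a σ-finite measure, (S_x)_{x∈B} a family of measurable sets indexed by a Boolean algebra B with S_{x∧y} = S_x ∩ S_y a.e.-μ, and for a finite Boolean subalgebra b with atom set at(b) define K_b := ∑_{a∈at(b)} 1_{S∖S_{a'}} where a' is the complement of a in B. If b₁ ⊆ b₂ are finite Boolean subalgebras then K_{b₁} ≤ K_{b₂} a.e.-μ. -/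
/-!
Every atom `a` of `b₁` lies in `b₂` and is the join of the atoms of `b₂` below it, so
`S_{aᶜ} = ⋂ S_{cᶜ}` a.e., over those atoms `c`. Hence, off a null set, every atom of `b₁` counted
by `K_{b₁}(s)` lies above some atom of `b₂` counted by `K_{b₂}(s)`, and since distinct atoms of `b₁`
are disjoint, no atom of `b₂` is chosen twice.
-/

open scoped Classical
open MeasureTheory

namespace Finset

variable {B : Type*} [BooleanAlgebra B]

/-- `at(b)`; when `b` is a Boolean subalgebra these are exactly its atoms. -/
noncomputable def relAtoms (b : Finset B) : Finset B :=
  b.filter fun a => a ≠ ⊥ ∧ ∀ c ∈ b, c ≤ a → c = ⊥ ∨ c = a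

variable {b : Finset B} {a a' u w : B}

theorem mem_relAtoms :
    a ∈ b.relAtoms ↔ a ∈ b ∧ a ≠ ⊥ ∧ ∀ c ∈ b, c ≤ a → c = ⊥ ∨ c = a :=
  mem_filter

theorem ne_bot_of_mem_relAtoms (ha : a ∈ b.relAtoms) : a ≠ ⊥ :=
  (mem_relAtoms.1 ha).2.1

theorem exists_mem_relAtoms_le (hw : w ∈ b) (hw₀ : w ≠ ⊥) : ∃ a ∈ b.relAtoms, a ≤ w := by
  obtain ⟨a, haw, hmin⟩ := (b.filter (· ≠ ⊥)).exists_le_minimal (mem_filter.2 ⟨hw, hw₀⟩)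
  obtain ⟨hab, ha₀⟩ := mem_filter.1 hmin.prop
  refine ⟨a, mem_relAtoms.2 ⟨hab, ha₀, fun c hc hca => ?_⟩, haw⟩
  by_cases hc₀ : c = ⊥
  · exact Or.inl hc₀
  · exact Or.inr (le_antisymm hca (hmin.2 (mem_filter.2 ⟨hc, hc₀⟩) hca))

theorem inf_eq_bot_of_mem_relAtoms (hinf : ∀ u ∈ b, ∀ v ∈ b, u ⊓ v ∈ b)
    (ha : a ∈ b.relAtoms) (ha' : a' ∈ b.relAtoms) (hne : a ≠ a') : a ⊓ a' = ⊥ := by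
  obtain ⟨hab, -, hmin⟩ := mem_relAtoms.1 ha
  obtain ⟨ha'b, -, hmin'⟩ := mem_relAtoms.1 ha'
  have hmem := hinf a hab a' ha'b
  by_contra h₀
  exact hne (((hmin _ hmem inf_le_left).resolve_left h₀).symm.trans
    ((hmin' _ hmem inf_le_right).resolve_left h₀))

theorem sup_relAtoms_le_eq (hbot : ⊥ ∈ b) (hcompl : ∀ u ∈ b, uᶜ ∈ b)
    (hinf : ∀ u ∈ b, ∀ v ∈ b, u ⊓ v ∈ b) (hsup : ∀ u ∈ b, ∀ v ∈ b, u ⊔ v ∈ b) (hu : u ∈ b) :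
    (b.relAtoms.filter (· ≤ u)).sup id = u := by
  set v := (b.relAtoms.filter (· ≤ u)).sup id
  have hv : v ∈ b := sup_mem (b : Set B) hbot hsup _ _ fun c hc =>
    (mem_relAtoms.1 (mem_filter.1 hc).1).1
  refine le_antisymm (Finset.sup_le fun c hc => (mem_filter.1 hc).2) ?_
  -- an atom of `b` below `u ⊓ vᶜ ∈ b` would lie both below `v` and below `vᶜ`
  by_contra huv
  obtain ⟨c, hc, hcuv⟩ := exists_mem_relAtoms_le (hinf u hu _ (hcompl v hv))
    (by rwa [← sdiff_eq, ne_eq, sdiff_eq_bot_iff])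
  have hcv : c ≤ v := le_sup (f := id) (mem_filter.2 ⟨hc, hcuv.trans inf_le_left⟩)
  exact ne_bot_of_mem_relAtoms hc <|
    le_bot_iff.1 (inf_compl_eq_bot (a := v) ▸ le_inf hcv (hcuv.trans inf_le_right))

theorem card_filter_relAtoms_le {b₁ b₂ : Finset B} {p q : B → Prop}
    (hinf : ∀ u ∈ b₁, ∀ v ∈ b₁, u ⊓ v ∈ b₁)
    (h : ∀ a ∈ b₁.relAtoms, p a → ∃ c ∈ b₂.relAtoms, c ≤ a ∧ q c) :
    #(b₁.relAtoms.filter p) ≤ #(b₂.relAtoms.filter q) := by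
  refine card_le_card_of_forall_subsingleton (fun a c => c ≤ a) (fun a ha => ?_) ?_
  · obtain ⟨c, hc, hca, hqc⟩ := h a (mem_filter.1 ha).1 (mem_filter.1 ha).2
    exact ⟨c, mem_filter.2 ⟨hc, hqc⟩, hca⟩
  · rintro c hc a ⟨ha, hca⟩ a' ⟨ha', hca'⟩
    by_contra hne
    have hdisj := inf_eq_bot_of_mem_relAtoms hinf (mem_filter.1 ha).1 (mem_filter.1 ha').1 hne
    exact ne_bot_of_mem_relAtoms (mem_filter.1 hc).1 (le_bot_iff.1 (hdisj ▸ le_inf hca hca'))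

theorem sum_indicator_one_eq_card {ι X : Type*} (t : Finset ι) (A : ι → Set X) (x : X) :
    ∑ i ∈ t, (A i).indicator (fun _ => (1 : ℕ)) x = #(t.filter (x ∈ A ·)) := by
  simp only [Set.indicator_apply, sum_boole, Nat.cast_id]

end Finset

theorem finset_inf_ae_eq_biInter {B X ι : Type*} [BooleanAlgebra B] [MeasurableSpace X]
    {μ : Measure X} {S : B → Set X} (htop : S ⊤ = Set.univ)
    (hinf : ∀ u v, S (u ⊓ v) =ᵐ[μ] (S u ∩ S v : Set X)) (t : Finset ι) (f : ι → B) :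
    S (t.inf f) =ᵐ[μ] ⋂ i ∈ t, S (f i) := by
  induction t using Finset.induction_on with
  | empty => simp [htop]
  | insert i t _ ih =>
    rw [Finset.inf_insert, Finset.set_biInter_insert]
    exact (hinf _ _).trans (Filter.EventuallyEq.rfl.inter ih)

theorem counting_map_mono_general {B : Type*} [BooleanAlgebra B] {X : Type*} [MeasurableSpace X]
    (μ : MeasureTheory.Measure X)
    (S : B → Set X)
    (hStop : S ⊤ = Set.univ)
    (hSinf : ∀ b c : B, S (b ⊓ c) =ᵐ[μ] ((S b ∩ S c : Set X)))
    (b₁ b₂ : Finset B)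
    (h₁ : ⊥ ∈ b₁ ∧ ⊤ ∈ b₁ ∧ (∀ u ∈ b₁, uᶜ ∈ b₁) ∧ (∀ u ∈ b₁, ∀ v ∈ b₁, u ⊓ v ∈ b₁) ∧
      (∀ u ∈ b₁, ∀ v ∈ b₁, u ⊔ v ∈ b₁))
    (h₂ : ⊥ ∈ b₂ ∧ ⊤ ∈ b₂ ∧ (∀ u ∈ b₂, uᶜ ∈ b₂) ∧ (∀ u ∈ b₂, ∀ v ∈ b₂, u ⊓ v ∈ b₂) ∧
      (∀ u ∈ b₂, ∀ v ∈ b₂, u ⊔ v ∈ b₂))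
    (hsub : b₁ ⊆ b₂) :
    ∀ᵐ s ∂μ,
      (∑ a ∈ b₁.filter (fun a => a ≠ ⊥ ∧ ∀ c ∈ b₁, c ≤ a → c = ⊥ ∨ c = a),
          (Set.univ \ S (aᶜ)).indicator (fun _ => (1 : ℕ)) s)
        ≤ ∑ a ∈ b₂.filter (fun a => a ≠ ⊥ ∧ ∀ c ∈ b₂, c ≤ a → c = ⊥ ∨ c = a),
            (Set.univ \ S (aᶜ)).indicator (fun _ => (1 : ℕ)) s := by
  obtain ⟨hbot₂, -, hcompl₂, hinf₂, hsup₂⟩ := h₂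
  have hsplit : ∀ a ∈ b₁.relAtoms, S aᶜ =ᵐ[μ] ⋂ c ∈ b₂.relAtoms.filter (· ≤ a), S cᶜ := by
    intro a ha
    have hab₂ := hsub (Finset.mem_relAtoms.1 ha).1
    rw [← congrArg compl (Finset.sup_relAtoms_le_eq hbot₂ hcompl₂ hinf₂ hsup₂ hab₂),
      Finset.compl_sup]
    exact finset_inf_ae_eq_biInter hStop hSinf _ _
  filter_upwards [(Filter.eventually_all_finset _).2 hsplit] with s hs
  change ∑ a ∈ b₁.relAtoms, _ ≤ ∑ a ∈ b₂.relAtoms, _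
  rw [Finset.sum_indicator_one_eq_card, Finset.sum_indicator_one_eq_card]
  refine Finset.card_filter_relAtoms_le h₁.2.2.2.1 fun a ha has => ?_
  have : s ∉ ⋂ c ∈ b₂.relAtoms.filter (· ≤ a), S cᶜ :=
    fun h => has.2 ((iff_of_eq (hs a ha)).2 h)
  simpa [Set.mem_iInter₂] using this

/-- Monotonicity of the counting functions `K_b`: given spectral sets `(S_x)_{x ∈ B}` with
`S_{x∧y} = S_x ∩ S_y` a.e.-`μ`, and finite Boolean subalgebras `b₁ ⊆ b₂`, the counts
`K_b = ∑_{a ∈ at(b)} 1_{S ∖ S_{aᶜ}}` satisfy `K_{b₁} ≤ K_{b₂}` a.e.-`μ`. -/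
theorem counting_map_mono {B : Type*} [BooleanAlgebra B] {X : Type*} [MeasurableSpace X]
    (μ : MeasureTheory.Measure X) [MeasureTheory.SigmaFinite μ]
    (S : B → Set X) (hSmeas : ∀ b, MeasurableSet (S b))
    (hStop : S ⊤ = Set.univ)
    (hSinf : ∀ b c : B, S (b ⊓ c) =ᵐ[μ] ((S b ∩ S c : Set X)))
    (b₁ b₂ : Finset B)
    (h₁ : ⊥ ∈ b₁ ∧ ⊤ ∈ b₁ ∧ (∀ u ∈ b₁, uᶜ ∈ b₁) ∧ (∀ u ∈ b₁, ∀ v ∈ b₁, u ⊓ v ∈ b₁) ∧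
      (∀ u ∈ b₁, ∀ v ∈ b₁, u ⊔ v ∈ b₁))
    (h₂ : ⊥ ∈ b₂ ∧ ⊤ ∈ b₂ ∧ (∀ u ∈ b₂, uᶜ ∈ b₂) ∧ (∀ u ∈ b₂, ∀ v ∈ b₂, u ⊓ v ∈ b₂) ∧
      (∀ u ∈ b₂, ∀ v ∈ b₂, u ⊔ v ∈ b₂))
    (hsub : b₁ ⊆ b₂) :
    ∀ᵐ s ∂μ,
      (∑ a ∈ b₁.filter (fun a => a ≠ ⊥ ∧ ∀ c ∈ b₁, c ≤ a → c = ⊥ ∨ c = a),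
          (Set.univ \ S (aᶜ)).indicator (fun _ => (1 : ℕ)) s)
        ≤ ∑ a ∈ b₂.filter (fun a => a ≠ ⊥ ∧ ∀ c ∈ b₂, c ≤ a → c = ⊥ ∨ c = a),
            (Set.univ \ S (aᶜ)).indicator (fun _ => (1 : ℕ)) s :=
  counting_map_mono_general μ S hStop hSinf b₁ b₂ h₁ h₂ hsub
end
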